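/- arXiv:2004.14149 — 9 statements merged into one kernel-verified Lean document; each statement's English description precedes it below -/
import Mathlib

section
/- Let Q be a probability measure, f ∈ L²_Q, and Θ a compact topological space. Suppose that for every θ ∈ Θ there are functions φ_{θ,1}, …, φ_{θ,m} ∈ L²_Q such that (i) for each i the map θ ↦ φ_{θ,i} is continuous from Θ into L²_Q, and (ii) for each θ the family {φ_{θ,1}, …, φ_{θ,m}} is linearly independent in L²_Q. Then the minimization problem min over (θ, β) ∈ Θ × ℝ^m of ‖f − Σ_{i=1}^m β_i φ_{θ,i}‖_{L²_Q} admits a minimizer, i.e. there exists (θ*, β*) ∈ Θ × ℝ^m attaining the infimum. -/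
open MeasureTheory

set_option maxHeartbeats 1000000 in
/-- Existence of a minimizer for the feature-learning problem
`min_{(θ,β) ∈ Θ × ℝ^m} ‖f − Σᵢ βᵢ φ_{θ,i}‖_{L²_Q}` when `Θ` is compact (and nonempty),
`θ ↦ φ_{θ,i}` is continuous into `L²_Q` for each `i`, and `{φ_{θ,1},…,φ_{θ,m}}` is
linearly independent in `L²_Q` for each `θ`. -/
theorem stmt0 {α : Type*} [MeasurableSpace α] (Q : Measure α) [IsProbabilityMeasure Q]
    (f : Lp ℝ 2 Q) {Θ : Type*} [TopologicalSpace Θ] [CompactSpace Θ] [Nonempty Θ]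
    (m : ℕ) (φ : Θ → Fin m → Lp ℝ 2 Q)
    (hcont : ∀ i, Continuous fun θ => φ θ i)
    (hli : ∀ θ, LinearIndependent ℝ (φ θ)) :
    ∃ θ : Θ, ∃ β : Fin m → ℝ, ∀ θ' : Θ, ∀ β' : Fin m → ℝ,
      ‖f - ∑ i, β i • φ θ i‖ ≤ ‖f - ∑ i, β' i • φ θ' i‖ := by
  classical
  have hsumcont : Continuous fun p : Θ × (Fin m → ℝ) => ∑ i, p.2 i • φ p.1 i := by
    apply continuous_finset_sum
    intro i _
    exact ((continuous_apply i).comp continuous_snd).smul ((hcont i).comp continuous_fst)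
  obtain ⟨c, hc, hcb⟩ : ∃ c > 0, ∀ (θ : Θ) (β : Fin m → ℝ),
      c * ‖β‖ ≤ ‖∑ i, β i • φ θ i‖ := by
    by_cases hm : ∀ β : Fin m → ℝ, β = 0
    · refine ⟨1, one_pos, fun θ β => ?_⟩
      rw [hm β]
      simp
    · push_neg at hm
      obtain ⟨β₀, hβ₀⟩ := hm
      have hK : IsCompact ((Set.univ : Set Θ) ×ˢ Metric.sphere (0 : Fin m → ℝ) 1) :=
        isCompact_univ.prod (isCompact_sphere 0 1)
      have hne : ((Set.univ : Set Θ) ×ˢ Metric.sphere (0 : Fin m → ℝ) 1).Nonempty := by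
        refine ⟨(Classical.arbitrary Θ, ‖β₀‖⁻¹ • β₀), Set.mem_univ _, ?_⟩
        rw [mem_sphere_zero_iff_norm, norm_smul, norm_inv, norm_norm,
          inv_mul_cancel₀ (norm_ne_zero_iff.mpr hβ₀)]
      obtain ⟨⟨θ₀, u₀⟩, ⟨-, hu₀⟩, hmin⟩ :=
        hK.exists_isMinOn hne (hsumcont.norm.continuousOn)
      rw [mem_sphere_zero_iff_norm] at hu₀
      have hcpos : 0 < ‖∑ i, u₀ i • φ θ₀ i‖ := by
        rw [norm_pos_iff]
        intro h0
        have := Fintype.linearIndependent_iff.mp (hli θ₀) u₀ h0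
        have : u₀ = 0 := funext this
        rw [this] at hu₀; simp at hu₀
      refine ⟨‖∑ i, u₀ i • φ θ₀ i‖, hcpos, fun θ β => ?_⟩
      rcases eq_or_ne β 0 with rfl | hβ
      · simp
      · set u := ‖β‖⁻¹ • β with hu
        have hun : ‖u‖ = 1 := by
          rw [hu, norm_smul, norm_inv, norm_norm,
            inv_mul_cancel₀ (norm_ne_zero_iff.mpr hβ)]
        have hle : ‖∑ i, u₀ i • φ θ₀ i‖ ≤ ‖∑ i, u i • φ θ i‖ :=
          isMinOn_iff.mp hmin (θ, u) ⟨Set.mem_univ _, mem_sphere_zero_iff_norm.mpr hun⟩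
        have heq : ∑ i, β i • φ θ i = ‖β‖ • ∑ i, u i • φ θ i := by
          rw [Finset.smul_sum]
          refine Finset.sum_congr rfl fun i _ => ?_
          rw [hu, smul_smul]
          congr 1
          simp only [Pi.smul_apply, smul_eq_mul]
          rw [← mul_assoc, mul_inv_cancel₀ (norm_ne_zero_iff.mpr hβ), one_mul]
        rw [heq, norm_smul, norm_norm, mul_comm]
        exact mul_le_mul_of_nonneg_left hle (norm_nonneg _)
  set R : ℝ := (2 * ‖f‖ + 1) / c with hR
  have hR0 : 0 ≤ R := div_nonneg (by positivity) hc.le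
  have hK : IsCompact ((Set.univ : Set Θ) ×ˢ Metric.closedBall (0 : Fin m → ℝ) R) :=
    isCompact_univ.prod (isCompact_closedBall 0 R)
  have hne : ((Set.univ : Set Θ) ×ˢ Metric.closedBall (0 : Fin m → ℝ) R).Nonempty :=
    ⟨(Classical.arbitrary Θ, 0), Set.mem_univ _, Metric.mem_closedBall_self hR0⟩
  have hFcont : Continuous fun p : Θ × (Fin m → ℝ) => ‖f - ∑ i, p.2 i • φ p.1 i‖ :=
    (continuous_const.sub hsumcont).norm
  obtain ⟨⟨θs, βs⟩, ⟨-, hβs⟩, hmin⟩ := hK.exists_isMinOn hne hFcont.continuousOn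
  refine ⟨θs, βs, fun θ' β' => ?_⟩
  rcases le_or_gt ‖β'‖ R with h | h
  · exact isMinOn_iff.mp hmin (θ', β') ⟨Set.mem_univ _, by rwa [Metric.mem_closedBall, dist_zero_right]⟩
  · have h1 : ‖f - ∑ i, βs i • φ θs i‖ ≤ ‖f‖ := by
      have := isMinOn_iff.mp hmin (θ', 0) ⟨Set.mem_univ _, Metric.mem_closedBall_self hR0⟩
      simpa using this
    have h2 : ‖f‖ + 1 ≤ ‖f - ∑ i, β' i • φ θ' i‖ := by
      have hb : c * ‖β'‖ ≤ ‖∑ i, β' i • φ θ' i‖ := hcb θ' β'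
      have hb2 : 2 * ‖f‖ + 1 < c * ‖β'‖ := by
        have : c * R < c * ‖β'‖ := by exact mul_lt_mul_of_pos_left h hc
        rwa [hR, mul_div_cancel₀ _ hc.ne'] at this
      have h3 : ‖∑ i, β' i • φ θ' i‖ - ‖f‖ ≤ ‖f - ∑ i, β' i • φ θ' i‖ := by
        rw [norm_sub_rev]
        exact le_trans (by linarith [norm_sub_norm_le (∑ i, β' i • φ θ' i) f]) le_rfl
      linarith
    linarith
end

section
/- Let f = (1, 0) ∈ ℝ², Θ = [0, 1], and define φ_θ ∈ ℝ² by φ_θ = (1, θ)/√(1+θ²) for θ ∈ (0, 1] and φ_0 = (0, 1). Then inf over (θ, β) ∈ Θ × ℝ of ‖f − β φ_θ‖_{ℝ²} equals 0, but the infimum is not attained: ‖f − β φ_θ‖_{ℝ²} > 0 for all (θ, β) ∈ Θ × ℝ. (This shows the continuity assumption in the existence lemma for the feature-learning problem cannot be dropped.) -/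
/-- With `f = (1,0) ∈ ℝ²`, `Θ = [0,1]`, `φ_θ = (1,θ)/√(1+θ²)` for
`θ ∈ (0,1]` and `φ_0 = (0,1)` (so `θ ↦ φ_θ` is not continuous), the infimum of
`‖f − β φ_θ‖` over `(θ,β) ∈ Θ × ℝ` is `0` but it is not attained
(continuity cannot be dropped in the existence lemma). -/
theorem stmt2
    (f : EuclideanSpace ℝ (Fin 2)) (hf : f = !₂[1, 0])
    (φ : ℝ → EuclideanSpace ℝ (Fin 2))
    (hφ : ∀ θ ∈ Set.Ioc (0 : ℝ) 1,
      φ θ = (Real.sqrt (1 + θ ^ 2))⁻¹ • (!₂[1, θ] : EuclideanSpace ℝ (Fin 2)))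
    (hφ0 : φ 0 = !₂[0, 1]) :
    sInf {r : ℝ | ∃ θ ∈ Set.Icc (0 : ℝ) 1, ∃ β : ℝ, r = ‖f - β • φ θ‖} = 0 ∧
      ∀ θ ∈ Set.Icc (0 : ℝ) 1, ∀ β : ℝ, 0 < ‖f - β • φ θ‖ := by
  set S := {r : ℝ | ∃ θ ∈ Set.Icc (0 : ℝ) 1, ∃ β : ℝ, r = ‖f - β • φ θ‖} with hS
  have hnonneg : ∀ r ∈ S, 0 ≤ r := by
    rintro r ⟨θ, hθ, β, rfl⟩; exact norm_nonneg _
  have hbdd : BddBelow S := ⟨0, hnonneg⟩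
  -- key : for θ ∈ (0,1], θ ∈ S
  have hkey : ∀ θ : ℝ, θ ∈ Set.Ioc (0:ℝ) 1 → θ ∈ S := by
    intro θ hθ
    refine ⟨θ, ⟨le_of_lt hθ.1, hθ.2⟩, Real.sqrt (1 + θ ^ 2), ?_⟩
    have hpos : (0:ℝ) < 1 + θ ^ 2 := by positivity
    have hs : Real.sqrt (1 + θ ^ 2) ≠ 0 := by positivity
    rw [hφ θ hθ, smul_smul, mul_inv_cancel₀ hs, one_smul, hf]
    have : (!₂[1, 0] : EuclideanSpace ℝ (Fin 2)) - !₂[1, θ] = !₂[0, -θ] := by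
      ext i; fin_cases i <;> simp
    rw [this, EuclideanSpace.norm_eq]
    rw [Fin.sum_univ_two]
    simp only [Matrix.cons_val_zero, Matrix.cons_val_one, Matrix.head_cons]
    simp only [Real.norm_eq_abs, abs_neg, sq_abs, norm_zero]
    rw [show (0:ℝ)^2 + θ^2 = θ^2 by ring]
    exact (Real.sqrt_sq hθ.1.le).symm
  constructor
  · refine le_antisymm ?_ (le_csInf ⟨1, hkey 1 ⟨one_pos, le_refl 1⟩⟩ hnonneg)
    refine le_of_forall_pos_le_add ?_
    intro ε hε
    have hmem : min ε 1 ∈ S := hkey _ ⟨lt_min hε one_pos, min_le_right _ _⟩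
    calc sInf S ≤ min ε 1 := csInf_le hbdd hmem
      _ ≤ ε := min_le_left _ _
      _ = 0 + ε := (zero_add ε).symm
  · intro θ hθ β
    rw [norm_pos_iff, sub_ne_zero]
    rcases eq_or_lt_of_le hθ.1 with h0 | h0
    · subst hf
      rw [← h0, hφ0]
      intro h
      have := congrArg (fun v => v 0) h
      simp [EuclideanSpace] at this
    · subst hf
      rw [hφ θ ⟨h0, hθ.2⟩, smul_smul]
      set c := β * (Real.sqrt (1 + θ ^ 2))⁻¹ with hc
      intro h
      have h0' := congrArg (fun v => v 0) h
      have h1' := congrArg (fun v => v 1) h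
      simp only [PiLp.smul_apply, smul_eq_mul, Matrix.cons_val_zero,
        Matrix.cons_val_one, Matrix.head_cons] at h0' h1'
      nlinarith [h0', h1', h0]
end

section
/- Let f = (1, 0) ∈ ℝ², Θ = [0, 1], and for θ ∈ Θ set φ_θ = θ (1, θ)/√(1+θ²) ∈ ℝ² (so φ_0 = 0). Then inf over (θ, β) ∈ Θ × ℝ of ‖f − β φ_θ‖_{ℝ²} equals 0, but the infimum is not attained: ‖f − β φ_θ‖_{ℝ²} > 0 for all (θ, β) ∈ Θ × ℝ. (This shows the linear-independence assumption in the existence lemma for the feature-learning problem cannot be dropped.) -/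
lemma comp0 (f : EuclideanSpace ℝ (Fin 2)) (hf : f = !₂[1, 0])
    (φ : ℝ → EuclideanSpace ℝ (Fin 2))
    (hφ : ∀ θ, φ θ = (θ * (Real.sqrt (1 + θ ^ 2))⁻¹) • (!₂[1, θ] : EuclideanSpace ℝ (Fin 2)))
    (θ β : ℝ) :
    (f - β • φ θ) 0 = 1 - β * (θ * (Real.sqrt (1 + θ ^ 2))⁻¹) := by
  subst hf; rw [hφ]
  simp [PiLp.sub_apply, PiLp.smul_apply, smul_eq_mul]

lemma comp1 (f : EuclideanSpace ℝ (Fin 2)) (hf : f = !₂[1, 0])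
    (φ : ℝ → EuclideanSpace ℝ (Fin 2))
    (hφ : ∀ θ, φ θ = (θ * (Real.sqrt (1 + θ ^ 2))⁻¹) • (!₂[1, θ] : EuclideanSpace ℝ (Fin 2)))
    (θ β : ℝ) :
    (f - β • φ θ) 1 = -(β * (θ * (Real.sqrt (1 + θ ^ 2))⁻¹) * θ) := by
  subst hf; rw [hφ]
  simp [PiLp.sub_apply, PiLp.smul_apply, smul_eq_mul]; ring

lemma norm_val (f : EuclideanSpace ℝ (Fin 2)) (hf : f = !₂[1, 0])
    (φ : ℝ → EuclideanSpace ℝ (Fin 2))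
    (hφ : ∀ θ, φ θ = (θ * (Real.sqrt (1 + θ ^ 2))⁻¹) • (!₂[1, θ] : EuclideanSpace ℝ (Fin 2)))
    (θ β : ℝ) :
    ‖f - β • φ θ‖ = Real.sqrt ((1 - β * (θ * (Real.sqrt (1 + θ ^ 2))⁻¹))^2
        + (β * (θ * (Real.sqrt (1 + θ ^ 2))⁻¹) * θ)^2) := by
  rw [EuclideanSpace.norm_eq, Fin.sum_univ_two, comp0 f hf φ hφ, comp1 f hf φ hφ]
  congr 1
  rw [Real.norm_eq_abs, Real.norm_eq_abs, sq_abs, sq_abs]; ring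

lemma sqrt_pos' (θ : ℝ) : 0 < Real.sqrt (1 + θ ^ 2) := by
  apply Real.sqrt_pos.2; positivity

/-- With `f = (1,0) ∈ ℝ²`, `Θ = [0,1]` and `φ_θ = θ(1,θ)/√(1+θ²)`
(so `φ_0 = 0` is not linearly independent), the infimum of `‖f − β φ_θ‖` over
`(θ,β) ∈ Θ × ℝ` is `0` but it is not attained (linear independence cannot be
dropped in the existence lemma). -/
theorem stmt3
    (f : EuclideanSpace ℝ (Fin 2)) (hf : f = !₂[1, 0])
    (φ : ℝ → EuclideanSpace ℝ (Fin 2))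
    (hφ : ∀ θ, φ θ = (θ * (Real.sqrt (1 + θ ^ 2))⁻¹) • (!₂[1, θ] : EuclideanSpace ℝ (Fin 2))) :
    sInf {r : ℝ | ∃ θ ∈ Set.Icc (0 : ℝ) 1, ∃ β : ℝ, r = ‖f - β • φ θ‖} = 0 ∧
      ∀ θ ∈ Set.Icc (0 : ℝ) 1, ∀ β : ℝ, 0 < ‖f - β • φ θ‖ := by
  set S := {r : ℝ | ∃ θ ∈ Set.Icc (0 : ℝ) 1, ∃ β : ℝ, r = ‖f - β • φ θ‖} with hS
  have hpos : ∀ θ ∈ Set.Icc (0 : ℝ) 1, ∀ β : ℝ, 0 < ‖f - β • φ θ‖ := by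
    intro θ hθ β
    rw [norm_pos_iff]
    intro h
    have h0 : (1 : ℝ) - β * (θ * (Real.sqrt (1 + θ ^ 2))⁻¹) = 0 := by
      rw [← comp0 f hf φ hφ θ β, h]; rfl
    have h1 : β * (θ * (Real.sqrt (1 + θ ^ 2))⁻¹) * θ = 0 := by
      have : (f - β • φ θ) 1 = 0 := by rw [h]; rfl
      rw [comp1 f hf φ hφ] at this; linarith
    have hbθ : β * (θ * (Real.sqrt (1 + θ ^ 2))⁻¹) = 1 := by linarith
    rw [hbθ, one_mul] at h1
    rw [h1] at hbθ
    simp at hbθ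
  have hlb : ∀ r ∈ S, (0:ℝ) ≤ r := by
    rintro r ⟨θ, hθ, β, rfl⟩; positivity
  have hbdd : BddBelow S := ⟨0, hlb⟩
  have hne : S.Nonempty := ⟨‖f - (0:ℝ) • φ 0‖, 0, by simp, 0, rfl⟩
  constructor
  · apply le_antisymm
    · apply le_of_forall_pos_le_add
      intro ε hε
      rw [zero_add]
      have hθ0 : (0:ℝ) < min ε 1 := lt_min hε one_pos
      set θ := min ε 1 with hθd
      have hθ1 : θ ≤ 1 := min_le_right _ _
      have hs := sqrt_pos' θ
      have hmem : θ ∈ S := by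
        refine ⟨θ, ⟨le_of_lt hθ0, hθ1⟩, Real.sqrt (1 + θ ^ 2) / θ, ?_⟩
        rw [norm_val f hf φ hφ]
        have hb : Real.sqrt (1 + θ ^ 2) / θ * (θ * (Real.sqrt (1 + θ ^ 2))⁻¹) = 1 := by
          field_simp
        rw [hb]
        simp
        rw [Real.sqrt_sq hθ0.le]
      calc sInf S ≤ θ := csInf_le hbdd hmem
        _ ≤ ε := min_le_left _ _
    · exact le_csInf hne hlb
  · exact hpos
end

section
/- Fix integers n ≥ p ≥ 1 and δ ≥ 1. Let A, Ã ∈ ℝ^{n×p} have full rank p and let b ∈ ℝ^p. Then the following are equivalent: (1) ÃᵀÃ = I_p (i.e. Ã lies in the Stiefel manifold V_p(ℝ^n)) and span{φ_{(A,b),1}, …, φ_{(A,b),m}} = span{φ_{(Ã,0),1}, …, φ_{(Ã,0),m}}; (2) Ã = A (AᵀA)^{-1/2} U for some orthogonal p×p matrix U. -/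
open Matrix MvPolynomial

namespace Stmt4Aux

lemma totalDegree_aeval_le {σ τ : Type*} [Fintype σ]
    (h : σ → MvPolynomial τ ℝ) (hh : ∀ i, (h i).totalDegree ≤ 1)
    (q : MvPolynomial σ ℝ) : ((aeval h) q).totalDegree ≤ q.totalDegree := by
  conv_lhs => rw [q.as_sum]
  rw [map_sum]
  refine (totalDegree_finset_sum _ _).trans (Finset.sup_le fun v hv => ?_)
  rw [aeval_monomial]
  refine (totalDegree_mul _ _).trans ?_
  have h1 : ((algebraMap ℝ (MvPolynomial τ ℝ)) (coeff v q)).totalDegree = 0 :=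
    totalDegree_C _
  rw [h1, zero_add]
  refine le_trans ?_ (le_totalDegree hv)
  rw [Finsupp.prod]
  refine (totalDegree_finset_prod _ _).trans ?_
  rw [Finsupp.sum]
  refine Finset.sum_le_sum fun i _ => ?_
  calc (h i ^ v i).totalDegree ≤ v i * (h i).totalDegree := totalDegree_pow _ _
    _ ≤ v i * 1 := Nat.mul_le_mul_left _ (hh i)
    _ = v i := mul_one _

variable {n p m : ℕ}

noncomputable def affSub (M : Matrix (Fin p) (Fin p) ℝ) (d : Fin p → ℝ) (j : Fin p) :
    MvPolynomial (Fin p) ℝ :=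
  (∑ k, C (M j k) * X k) + C (d j)

lemma affSub_totalDegree (M : Matrix (Fin p) (Fin p) ℝ) (d : Fin p → ℝ) (j : Fin p) :
    (affSub M d j).totalDegree ≤ 1 := by
  refine (totalDegree_add _ _).trans (max_le ?_ (by simp))
  refine (totalDegree_finset_sum _ _).trans (Finset.sup_le fun k _ => ?_)
  refine (totalDegree_mul _ _).trans ?_
  simp [totalDegree_X]

lemma eval_affSub (M : Matrix (Fin p) (Fin p) ℝ) (d : Fin p → ℝ) (v : Fin p → ℝ) (j : Fin p) :
    eval v (affSub M d j) = (M *ᵥ v + d) j := by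
  simp [affSub, mulVec, dotProduct]

lemma eval_aeval' (h : Fin p → MvPolynomial (Fin p) ℝ) (v : Fin p → ℝ)
    (q : MvPolynomial (Fin p) ℝ) :
    eval v (aeval h q) = eval (fun j => eval v (h j)) q := by
  rw [aeval_eq_bind₁]
  exact eval₂Hom_bind₁ (RingHom.id ℝ) v h q

noncomputable def featL (B : Matrix (Fin p) (Fin n) ℝ) (c : Fin p → ℝ) :
    MvPolynomial (Fin p) ℝ →ₗ[ℝ] ((Fin n → ℝ) → ℝ) where
  toFun q := fun x => eval (B *ᵥ x + c) q
  map_add' q r := funext fun x => by simp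
  map_smul' r q := funext fun x => by simp [smul_eval]

lemma span_feat_eq (B : Matrix (Fin p) (Fin n) ℝ) (c : Fin p → ℝ)
    (g : Fin m → MvPolynomial (Fin p) ℝ) :
    Submodule.span ℝ
        (Set.range fun i => fun x : Fin n → ℝ => eval (B *ᵥ x + c) (g i)) =
      (Submodule.span ℝ (Set.range g)).map (featL B c) := by
  rw [Submodule.map_span, ← Set.range_comp]
  rfl

lemma span_le_aux {δ : ℕ} (g : Fin m → MvPolynomial (Fin p) ℝ)
    (hdeg : ∀ i, (g i).totalDegree ≤ δ)
    (hgspan : ∀ q : MvPolynomial (Fin p) ℝ, q.totalDegree ≤ δ →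
      q ∈ Submodule.span ℝ (Set.range g))
    (B B' : Matrix (Fin p) (Fin n) ℝ) (c c' : Fin p → ℝ)
    (M : Matrix (Fin p) (Fin p) ℝ) (d : Fin p → ℝ)
    (hrel : ∀ x : Fin n → ℝ, B' *ᵥ x + c' = M *ᵥ (B *ᵥ x + c) + d) :
    Submodule.span ℝ
        (Set.range fun i => fun x : Fin n → ℝ => eval (B' *ᵥ x + c') (g i)) ≤
      Submodule.span ℝ
        (Set.range fun i => fun x : Fin n → ℝ => eval (B *ᵥ x + c) (g i)) := by
  rw [span_feat_eq B c g]
  refine Submodule.span_le.2 ?_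
  rintro _ ⟨i, rfl⟩
  refine ⟨aeval (affSub M d) (g i),
    hgspan _ ((totalDegree_aeval_le _ (affSub_totalDegree M d) _).trans (hdeg i)), ?_⟩
  show (fun x => eval (B *ᵥ x + c) (aeval (affSub M d) (g i))) = _
  funext x
  rw [eval_aeval']
  have hv : (fun j => eval (B *ᵥ x + c) (affSub M d j)) = B' *ᵥ x + c' := by
    funext j
    rw [eval_affSub, ← hrel x]
  rw [hv]

lemma mulVec_inj_of_rank (A : Matrix (Fin n) (Fin p) ℝ) (hA : A.rank = p) :
    ∀ x : Fin p → ℝ, A *ᵥ x = 0 → x = 0 := by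
  intro x hx
  have hrn := A.mulVecLin.finrank_range_add_finrank_ker
  rw [show Module.finrank ℝ (LinearMap.range A.mulVecLin) = A.rank from rfl, hA,
    Module.finrank_pi, Fintype.card_fin] at hrn
  have hk : Module.finrank ℝ (LinearMap.ker A.mulVecLin) = 0 := by omega
  have hker : LinearMap.ker A.mulVecLin = ⊥ := Submodule.finrank_eq_zero.mp hk
  have : x ∈ LinearMap.ker A.mulVecLin := hx
  rwa [hker, Submodule.mem_bot] at this

lemma posDef_gram (A : Matrix (Fin n) (Fin p) ℝ) (hA : A.rank = p) :
    (Aᵀ * A).PosDef := by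
  refine PosDef.of_dotProduct_mulVec_pos ?_ ?_
  · show (Aᵀ * A)ᴴ = Aᵀ * A
    rw [conjTranspose_eq_transpose_of_trivial, transpose_mul, transpose_transpose]
  · intro x hx
    have hx' : A *ᵥ x ≠ 0 := fun h => hx (mulVec_inj_of_rank A hA x h)
    have heq : star x ⬝ᵥ (Aᵀ * A) *ᵥ x = (A *ᵥ x) ⬝ᵥ (A *ᵥ x) := by
      rw [star_trivial, ← mulVec_mulVec, dotProduct_mulVec, vecMul_transpose]
    rw [heq]
    rcases lt_or_eq_of_le (Finset.sum_nonneg fun i _ => mul_self_nonneg ((A *ᵥ x) i)) with h | h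
    · exact h
    · exact absurd (dotProduct_self_eq_zero.mp h.symm) hx'

lemma eq_zero_of_mulVec (M : Matrix (Fin p) (Fin n) ℝ)
    (h : ∀ v : Fin n → ℝ, M *ᵥ v = 0) : M = 0 := by
  ext i j
  have := congrFun (h (Pi.single j 1)) i
  simpa [mulVec_single] using this

end Stmt4Aux

/-- For full-rank `A, A' ∈ ℝ^{n×p}` (`A'` playing the role of `Ã`),
`b ∈ ℝ^p`, and a basis `g₁,…,g_m` of the polynomials of total degree at most `δ`
on `ℝ^p`, the following are equivalent: (1) `A'ᵀA' = I_p` (i.e. `A'` lies in the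
Stiefel manifold `V_p(ℝ^n)`) and the spans of the feature maps `x ↦ gᵢ(Aᵀx + b)`
and `x ↦ gᵢ(A'ᵀx)` coincide; (2) `A' = A(AᵀA)^{-1/2}U` for some orthogonal `p×p`
matrix `U`, where `(AᵀA)^{-1/2}` is the inverse of the unique symmetric
positive-definite square root `R` of `AᵀA`. -/
theorem stmt4 (n p δ m : ℕ) (hp : 1 ≤ p) (hnp : p ≤ n) (hδ : 1 ≤ δ)
    (g : Fin m → MvPolynomial (Fin p) ℝ)
    (hdeg : ∀ i, (g i).totalDegree ≤ δ)
    (hgli : LinearIndependent ℝ g)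
    (hgspan : ∀ q : MvPolynomial (Fin p) ℝ, q.totalDegree ≤ δ →
      q ∈ Submodule.span ℝ (Set.range g))
    (A A' : Matrix (Fin n) (Fin p) ℝ) (b : Fin p → ℝ)
    (hA : A.rank = p) (hA' : A'.rank = p) :
    (A'ᵀ * A' = 1 ∧
        Submodule.span ℝ
            (Set.range fun i => fun x : Fin n → ℝ => MvPolynomial.eval (Aᵀ *ᵥ x + b) (g i)) =
          Submodule.span ℝ
            (Set.range fun i => fun x : Fin n → ℝ => MvPolynomial.eval (A'ᵀ *ᵥ x) (g i))) ↔
      ∃ R : Matrix (Fin p) (Fin p) ℝ, R.PosDef ∧ R * R = Aᵀ * A ∧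
        ∃ U : Matrix (Fin p) (Fin p) ℝ, Uᵀ * U = 1 ∧ A' = A * R⁻¹ * U := by
  classical
  constructor
  · rintro ⟨horth, hspan⟩
    have hGram := Stmt4Aux.posDef_gram A hA
    have hGdet : IsUnit (Aᵀ * A).det := isUnit_iff_ne_zero.2 (ne_of_gt hGram.det_pos)
    have hset : (Set.range fun i => fun x : Fin n → ℝ => eval (A'ᵀ *ᵥ x) (g i)) =
        Set.range fun i => fun x : Fin n → ℝ => eval (A'ᵀ *ᵥ x + 0) (g i) := by
      simp only [add_zero]
    rw [hset] at hspan
    -- kernel inclusion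
    have hkerA'A : ∀ k : Fin n → ℝ, Aᵀ *ᵥ k = 0 → A'ᵀ *ᵥ k = 0 := by
      intro k hk
      funext j
      have hXj : (X j : MvPolynomial (Fin p) ℝ) ∈ Submodule.span ℝ (Set.range g) :=
        hgspan _ (by rw [totalDegree_X]; exact hδ)
      have hmem : Stmt4Aux.featL A'ᵀ 0 (X j) ∈
          (Submodule.span ℝ (Set.range g)).map (Stmt4Aux.featL A'ᵀ 0) :=
        Submodule.mem_map_of_mem hXj
      rw [← Stmt4Aux.span_feat_eq A'ᵀ 0 g, ← hspan, Stmt4Aux.span_feat_eq Aᵀ b g] at hmem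
      obtain ⟨q, -, hq⟩ := hmem
      have hq' : ∀ x : Fin n → ℝ, eval (Aᵀ *ᵥ x + b) q = (A'ᵀ *ᵥ x) j := by
        intro x
        have hc := congrFun hq x
        simpa [Stmt4Aux.featL] using hc
      have h1 := hq' k
      have h0 := hq' 0
      rw [hk] at h1
      rw [mulVec_zero, mulVec_zero] at h0
      rw [Pi.zero_apply, ← h1, h0, Pi.zero_apply]
    -- A' = A * N
    have hAP : Aᵀ * (A * ((Aᵀ * A)⁻¹ * Aᵀ)) = Aᵀ := by
      rw [← Matrix.mul_assoc, ← Matrix.mul_assoc, Matrix.mul_nonsing_inv _ hGdet,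
        Matrix.one_mul]
    have hP : A'ᵀ * (A * ((Aᵀ * A)⁻¹ * Aᵀ)) = A'ᵀ := by
      have hdiff : ∀ v : Fin n → ℝ,
          (A'ᵀ * (A * ((Aᵀ * A)⁻¹ * Aᵀ)) - A'ᵀ) *ᵥ v = 0 := by
        intro v
        rw [sub_mulVec]
        have hkv : Aᵀ *ᵥ ((A * ((Aᵀ * A)⁻¹ * Aᵀ)) *ᵥ v - v) = 0 := by
          rw [mulVec_sub, mulVec_mulVec, hAP, sub_self]
        have hz := hkerA'A _ hkv
        rw [mulVec_sub, mulVec_mulVec] at hz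
        exact hz
      exact sub_eq_zero.mp (Stmt4Aux.eq_zero_of_mulVec _ hdiff)
    have hsymG : (Aᵀ * A)ᵀ = Aᵀ * A := by
      rw [transpose_mul, transpose_transpose]
    have hinvsym : ((Aᵀ * A)⁻¹)ᵀ = (Aᵀ * A)⁻¹ := by
      rw [transpose_nonsing_inv, hsymG]
    have hAN : A' = A * ((Aᵀ * A)⁻¹ * (Aᵀ * A')) := by
      have h := congrArg Matrix.transpose hP
      simp only [transpose_mul, transpose_transpose, hinvsym] at h
      calc A' = A * (Aᵀ * A)⁻¹ * Aᵀ * A' := h.symm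
        _ = A * ((Aᵀ * A)⁻¹ * (Aᵀ * A')) := by simp only [Matrix.mul_assoc]
    obtain ⟨N, hAN⟩ : ∃ N : Matrix (Fin p) (Fin p) ℝ, A' = A * N := ⟨_, hAN⟩
    have hRps : (Aᵀ * A).PosSemidef := hGram.posSemidef
    set R : Matrix (Fin p) (Fin p) ℝ := (by open scoped MatrixOrder in exact CFC.sqrt (Aᵀ * A)) with hRdef
    have hRsqps : R.PosSemidef := by open scoped MatrixOrder in exact (CFC.sqrt_nonneg (Aᵀ * A)).posSemidef
    have hRsq : R * R = Aᵀ * A := by open scoped MatrixOrder in exact CFC.sqrt_mul_sqrt_self _ hRps.nonneg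
    have hRpd : R.PosDef := by
      refine PosDef.of_dotProduct_mulVec_pos hRsqps.1 fun x hx => ?_
      rcases lt_or_eq_of_le (hRsqps.dotProduct_mulVec_nonneg x) with h | h
      · exact h
      · exfalso
        have hz : R *ᵥ x = 0 := (hRsqps.dotProduct_mulVec_zero_iff x).mp h.symm
        have hz2 : (Aᵀ * A) *ᵥ x = 0 := by
          rw [← hRsq, ← mulVec_mulVec, hz, mulVec_zero]
        have hpos := hGram.dotProduct_mulVec_pos hx
        rw [hz2, dotProduct_zero] at hpos
        exact lt_irrefl 0 hpos
    have hRdet : IsUnit R.det := isUnit_iff_ne_zero.2 (ne_of_gt hRpd.det_pos)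
    have hsymR : Rᵀ = R := by
      rw [← conjTranspose_eq_transpose_of_trivial]
      exact hRsqps.1
    have hUU : (R * N)ᵀ * (R * N) = 1 := by
      rw [transpose_mul, hsymR]
      calc Nᵀ * R * (R * N) = Nᵀ * ((R * R) * N) := by simp only [Matrix.mul_assoc]
        _ = Nᵀ * ((Aᵀ * A) * N) := by rw [hRsq]
        _ = (A * N)ᵀ * (A * N) := by
            rw [transpose_mul]; simp only [Matrix.mul_assoc]
        _ = A'ᵀ * A' := by rw [← hAN]
        _ = 1 := horth
    refine ⟨R, hRpd, hRsq, R * N, hUU, ?_⟩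
    calc A' = A * N := hAN
      _ = A * R⁻¹ * (R * N) := by
          rw [Matrix.mul_assoc, ← Matrix.mul_assoc R⁻¹ R N,
            Matrix.nonsing_inv_mul _ hRdet, Matrix.one_mul]
  · rintro ⟨R, hRpd, hRsq, U, hU, rfl⟩
    have hRdet : IsUnit R.det := isUnit_iff_ne_zero.2 (ne_of_gt hRpd.det_pos)
    have hsymR : Rᵀ = R := by
      rw [← conjTranspose_eq_transpose_of_trivial]
      exact hRpd.1
    have hUUT : U * Uᵀ = 1 := mul_eq_one_comm.mp hU
    have htr : (A * R⁻¹ * U)ᵀ = Uᵀ * (R⁻¹ * Aᵀ) := by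
      rw [transpose_mul, transpose_mul, transpose_nonsing_inv, hsymR]
    have hkey : R⁻¹ * (Aᵀ * A) * R⁻¹ = 1 := by
      rw [← hRsq, ← Matrix.mul_assoc, Matrix.nonsing_inv_mul _ hRdet, Matrix.one_mul,
        Matrix.mul_nonsing_inv _ hRdet]
    have horth : (A * R⁻¹ * U)ᵀ * (A * R⁻¹ * U) = 1 := by
      rw [htr]
      calc Uᵀ * (R⁻¹ * Aᵀ) * (A * R⁻¹ * U)
          = Uᵀ * ((R⁻¹ * (Aᵀ * A) * R⁻¹) * U) := by simp only [Matrix.mul_assoc]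
        _ = 1 := by rw [hkey, Matrix.one_mul, hU]
    have hM : (R * U) * (A * R⁻¹ * U)ᵀ = Aᵀ := by
      rw [htr]
      calc (R * U) * (Uᵀ * (R⁻¹ * Aᵀ)) = R * ((U * Uᵀ) * (R⁻¹ * Aᵀ)) := by
            simp only [Matrix.mul_assoc]
        _ = Aᵀ := by
            rw [hUUT, Matrix.one_mul, ← Matrix.mul_assoc,
              Matrix.mul_nonsing_inv _ hRdet, Matrix.one_mul]
    have hM2 : (Uᵀ * R⁻¹) * Aᵀ = (A * R⁻¹ * U)ᵀ := by
      rw [htr, Matrix.mul_assoc]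
    refine ⟨horth, ?_⟩
    have hset : (Set.range fun i => fun x : Fin n → ℝ =>
          eval ((A * R⁻¹ * U)ᵀ *ᵥ x) (g i)) =
        Set.range fun i => fun x : Fin n → ℝ =>
          eval ((A * R⁻¹ * U)ᵀ *ᵥ x + 0) (g i) := by
      simp only [add_zero]
    rw [hset]
    apply le_antisymm
    · refine Stmt4Aux.span_le_aux g hdeg hgspan (A * R⁻¹ * U)ᵀ Aᵀ 0 b (R * U) b ?_
      intro x
      rw [add_zero, mulVec_mulVec, hM]
    · refine Stmt4Aux.span_le_aux g hdeg hgspan Aᵀ (A * R⁻¹ * U)ᵀ b 0 (Uᵀ * R⁻¹)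
        (-((Uᵀ * R⁻¹) *ᵥ b)) ?_
      intro x
      rw [add_zero, mulVec_add, mulVec_mulVec, hM2]
      abel
end

section
/- Fix integers n ≥ p ≥ 1 and δ ≥ 1. Let A, Ã ∈ ℝ^{n×p} have full rank p and let b, b̃ ∈ ℝ^p. Then the following are equivalent: (1) ker Aᵀ = ker Ãᵀ; (2) Ã = A S for some invertible p×p matrix S; (3) span{φ_{(A,b),1}, …, φ_{(A,b),m}} = span{φ_{(Ã,b̃),1}, …, φ_{(Ã,b̃),m}}. -/
open Matrix MvPolynomial

noncomputable def evalMapL (n pp : ℕ) (A : Matrix (Fin n) (Fin pp) ℝ) (b : Fin pp → ℝ) :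
    MvPolynomial (Fin pp) ℝ →ₗ[ℝ] ((Fin n → ℝ) → ℝ) where
  toFun q := fun x => eval (Aᵀ *ᵥ x + b) q
  map_add' q r := by funext x; simp
  map_smul' c q := by funext x; simp [smul_eval]

lemma totalDegree_subst_le {pp : ℕ} (u : Fin pp → MvPolynomial (Fin pp) ℝ)
    (hu : ∀ j, (u j).totalDegree ≤ 1) (q : MvPolynomial (Fin pp) ℝ) :
    (eval₂ C u q).totalDegree ≤ q.totalDegree := by
  rw [eval₂_eq]
  refine totalDegree_finsetSum_le (fun d hd => ?_)
  calc (C (coeff d q) * ∏ i ∈ d.support, u i ^ d i).totalDegree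
      ≤ (C (coeff d q)).totalDegree + (∏ i ∈ d.support, u i ^ d i).totalDegree :=
        totalDegree_mul _ _
    _ ≤ ∑ i ∈ d.support, d i := by
        rw [totalDegree_C, zero_add]
        refine le_trans (totalDegree_finset_prod _ _) (Finset.sum_le_sum fun i _ => ?_)
        calc (u i ^ d i).totalDegree ≤ d i * (u i).totalDegree := totalDegree_pow _ _
          _ ≤ d i * 1 := Nat.mul_le_mul_left _ (hu i)
          _ = d i := Nat.mul_one _
    _ ≤ q.totalDegree := le_totalDegree hd

lemma mem_span_map {M N : Type*} [AddCommMonoid M] [Module ℝ M] [AddCommMonoid N]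
    [Module ℝ N] (L : M →ₗ[ℝ] N) {ι : Type*} (g : ι → M) {q : M}
    (hq : q ∈ Submodule.span ℝ (Set.range g)) :
    L q ∈ Submodule.span ℝ (Set.range fun i => L (g i)) := by
  have h2 : L q ∈ Submodule.map L (Submodule.span ℝ (Set.range g)) :=
    Submodule.mem_map_of_mem hq
  rwa [Submodule.map_span, ← Set.range_comp] at h2

lemma ker_eq_imp_exists (n pp : ℕ) (A A' : Matrix (Fin n) (Fin pp) ℝ)
    (hA : A.rank = pp) (hA' : A'.rank = pp)
    (hker : LinearMap.ker Aᵀ.mulVecLin = LinearMap.ker A'ᵀ.mulVecLin) :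
    ∃ S : Matrix (Fin pp) (Fin pp) ℝ, IsUnit S ∧ A' = A * S := by
  have hfin : Module.finrank ℝ (Fin pp → ℝ) = pp := by simp
  have hrangeA : LinearMap.range Aᵀ.mulVecLin = ⊤ :=
    Submodule.eq_top_of_finrank_eq (by
      rw [hfin]; rw [← Matrix.rank_transpose] at hA; exact hA)
  have hrangeA' : LinearMap.range A'ᵀ.mulVecLin = ⊤ :=
    Submodule.eq_top_of_finrank_eq (by
      rw [hfin]; rw [← Matrix.rank_transpose] at hA'; exact hA')
  obtain ⟨s, hs⟩ := Aᵀ.mulVecLin.exists_rightInverse_of_surjective hrangeA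
  have hs' : ∀ v, Aᵀ.mulVecLin (s v) = v := fun v => by
    have := LinearMap.ext_iff.mp hs v
    simpa using this
  set T := A'ᵀ.mulVecLin ∘ₗ s with hT
  have hfact : ∀ x, A'ᵀ.mulVecLin x = T (Aᵀ.mulVecLin x) := by
    intro x
    have hz : x - s (Aᵀ.mulVecLin x) ∈ LinearMap.ker Aᵀ.mulVecLin := by
      rw [LinearMap.mem_ker, map_sub, hs', sub_self]
    rw [hker, LinearMap.mem_ker, map_sub, sub_eq_zero] at hz
    simpa [hT] using hz
  have hTsurj : Function.Surjective T := by
    intro y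
    obtain ⟨x, hx⟩ := LinearMap.range_eq_top.mp hrangeA' y
    exact ⟨Aᵀ.mulVecLin x, by rw [← hfact]; exact hx⟩
  have hTbij : Function.Bijective T :=
    ⟨(LinearMap.injective_iff_surjective).mpr hTsurj, hTsurj⟩
  let e : (Fin pp → ℝ) ≃ₗ[ℝ] (Fin pp → ℝ) := LinearEquiv.ofBijective T hTbij
  have heT : (e : (Fin pp → ℝ) →ₗ[ℝ] (Fin pp → ℝ)) = T := rfl
  refine ⟨(LinearMap.toMatrix' T)ᵀ, ?_, ?_⟩
  · rw [Matrix.isUnit_iff_isUnit_det, Matrix.det_transpose, LinearMap.det_toMatrix']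
    rw [← heT]
    exact e.isUnit_det'
  · have key : A'ᵀ = LinearMap.toMatrix' T * Aᵀ := by
      apply Matrix.toLin'.injective
      rw [Matrix.toLin'_mul, Matrix.toLin'_toMatrix']
      apply LinearMap.ext
      intro x
      exact hfact x
    calc A' = (A'ᵀ)ᵀ := by rw [transpose_transpose]
      _ = (LinearMap.toMatrix' T * Aᵀ)ᵀ := by rw [key]
      _ = A * (LinearMap.toMatrix' T)ᵀ := by rw [transpose_mul, transpose_transpose]

lemma exists_imp_ker_eq (n pp : ℕ) (A A' : Matrix (Fin n) (Fin pp) ℝ)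
    (S : Matrix (Fin pp) (Fin pp) ℝ) (hS : IsUnit S) (hAS : A' = A * S) :
    LinearMap.ker Aᵀ.mulVecLin = LinearMap.ker A'ᵀ.mulVecLin := by
  subst hAS
  have hSt : IsUnit Sᵀ := by
    rw [Matrix.isUnit_iff_isUnit_det, Matrix.det_transpose,
      ← Matrix.isUnit_iff_isUnit_det]
    exact hS
  rw [Matrix.transpose_mul, Matrix.mulVecLin_mul]
  refine (LinearMap.ker_comp_of_ker_eq_bot _ ?_).symm
  rw [LinearMap.ker_eq_bot, Matrix.coe_mulVecLin]
  exact Matrix.mulVec_injective_iff_isUnit.mpr hSt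

lemma span_le_of_mul (n pp dd : ℕ) {mm : ℕ} (g : Fin mm → MvPolynomial (Fin pp) ℝ)
    (hdeg : ∀ i, (g i).totalDegree ≤ dd)
    (hgspan : ∀ q : MvPolynomial (Fin pp) ℝ, q.totalDegree ≤ dd →
      q ∈ Submodule.span ℝ (Set.range g))
    (A A' : Matrix (Fin n) (Fin pp) ℝ) (b b' : Fin pp → ℝ)
    (S : Matrix (Fin pp) (Fin pp) ℝ) (hAS : A' = A * S) :
    Submodule.span ℝ (Set.range fun i => fun x : Fin n → ℝ => eval (A'ᵀ *ᵥ x + b') (g i)) ≤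
      Submodule.span ℝ (Set.range fun i => fun x : Fin n → ℝ => eval (Aᵀ *ᵥ x + b) (g i)) := by
  rw [Submodule.span_le]
  rintro _ ⟨i, rfl⟩
  set u : Fin pp → MvPolynomial (Fin pp) ℝ :=
    fun j => (∑ k, C (Sᵀ j k) * (X k - C (b k))) + C (b' j) with hu
  have hudeg : ∀ j, (u j).totalDegree ≤ 1 := by
    intro j
    refine le_trans (totalDegree_add _ _) (max_le ?_ (by simp [totalDegree_C]))
    refine totalDegree_finsetSum_le fun k _ => ?_
    refine le_trans (totalDegree_mul _ _) ?_
    rw [totalDegree_C, zero_add]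
    exact le_trans (totalDegree_sub _ _) (by simp [totalDegree_X, totalDegree_C])
  have hmem : eval₂ C u (g i) ∈ Submodule.span ℝ (Set.range g) :=
    hgspan _ (le_trans (totalDegree_subst_le u hudeg (g i)) (hdeg i))
  have key := mem_span_map (evalMapL n pp A b) g hmem
  have heq : evalMapL n pp A b (eval₂ C u (g i)) =
      fun x : Fin n → ℝ => eval (A'ᵀ *ᵥ x + b') (g i) := by
    funext x
    show eval (Aᵀ *ᵥ x + b) (eval₂ C u (g i)) = _
    rw [← eval_assoc]
    have hpt : ⇑(eval (Aᵀ *ᵥ x + b)) ∘ u = A'ᵀ *ᵥ x + b' := by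
      funext j
      simp only [Function.comp_apply, hu, map_add, map_sum, _root_.map_mul, eval_C, map_sub, eval_X]
      have h1 : ∀ k, (Aᵀ *ᵥ x + b) k - b k = (Aᵀ *ᵥ x) k := fun k => by simp
      simp only [h1, hAS, Matrix.transpose_mul, ← Matrix.mulVec_mulVec]
      simp only [Matrix.mulVec, dotProduct, Matrix.mul_apply, Matrix.transpose_apply,
        Pi.add_apply, Finset.mul_sum]
    rw [hpt]
  rw [heq] at key
  exact key

lemma ker_le_of_span_le (n pp dd : ℕ) (hd : 1 ≤ dd) {mm : ℕ}
    (g : Fin mm → MvPolynomial (Fin pp) ℝ)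
    (hgspan : ∀ q : MvPolynomial (Fin pp) ℝ, q.totalDegree ≤ dd →
      q ∈ Submodule.span ℝ (Set.range g))
    (A A' : Matrix (Fin n) (Fin pp) ℝ) (b b' : Fin pp → ℝ)
    (hspan : Submodule.span ℝ
        (Set.range fun i => fun x : Fin n → ℝ => eval (A'ᵀ *ᵥ x + b') (g i)) ≤
      Submodule.span ℝ (Set.range fun i => fun x : Fin n → ℝ => eval (Aᵀ *ᵥ x + b) (g i))) :
    LinearMap.ker Aᵀ.mulVecLin ≤ LinearMap.ker A'ᵀ.mulVecLin := by
  intro z hz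
  rw [LinearMap.mem_ker] at hz
  have hz' : Aᵀ *ᵥ z = 0 := hz
  have hP : ∀ f ∈ Submodule.span ℝ
      (Set.range fun i => fun x : Fin n → ℝ => eval (Aᵀ *ᵥ x + b) (g i)),
      f z = f 0 := by
    intro f hf
    induction hf using Submodule.span_induction with
    | mem f hf =>
        obtain ⟨i, rfl⟩ := hf
        simp [hz', Matrix.mulVec_zero]
    | zero => rfl
    | add f f' _ _ h1 h2 => simp [h1, h2]
    | smul c f _ h1 => simp [h1]
  have hA'z : ∀ j, (A'ᵀ *ᵥ z) j = 0 := by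
    intro j
    have hq : (X j - C (b' j) : MvPolynomial (Fin pp) ℝ) ∈ Submodule.span ℝ (Set.range g) := by
      refine hgspan _ (le_trans (totalDegree_sub _ _) ?_)
      simp [totalDegree_X, totalDegree_C, hd]
    have hmem := mem_span_map (evalMapL n pp A' b') g hq
    have hmem2 : evalMapL n pp A' b' (X j - C (b' j)) ∈ Submodule.span ℝ
        (Set.range fun i => fun x : Fin n → ℝ => eval (A'ᵀ *ᵥ x + b') (g i)) := hmem
    have := hP _ (hspan hmem2)
    have h0 : evalMapL n pp A' b' (X j - C (b' j)) z = (A'ᵀ *ᵥ z) j := by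
      show eval (A'ᵀ *ᵥ z + b') (X j - C (b' j)) = _
      simp
    have h0' : evalMapL n pp A' b' (X j - C (b' j)) 0 = 0 := by
      show eval (A'ᵀ *ᵥ (0 : Fin n → ℝ) + b') (X j - C (b' j)) = 0
      simp [Matrix.mulVec_zero]
    rw [h0, h0'] at this
    exact this
  rw [LinearMap.mem_ker]
  exact funext hA'z


/-- For full-rank `A, A' ∈ ℝ^{n×p}` (`A'` playing the role of `Ã`),
`b, b' ∈ ℝ^p`, and a basis `g₁,…,g_m` of the polynomials of total degree at most
`δ` on `ℝ^p`, the following are equivalent: (1) `ker Aᵀ = ker A'ᵀ`;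
(2) `A' = A S` for some invertible `p×p` matrix `S`; (3) the spans of the
feature maps `x ↦ gᵢ(Aᵀx + b)` and `x ↦ gᵢ(A'ᵀx + b')` coincide. -/
theorem stmt5 (n p δ m : ℕ) (hp : 1 ≤ p) (hnp : p ≤ n) (hδ : 1 ≤ δ)
    (g : Fin m → MvPolynomial (Fin p) ℝ)
    (hdeg : ∀ i, (g i).totalDegree ≤ δ)
    (hgli : LinearIndependent ℝ g)
    (hgspan : ∀ q : MvPolynomial (Fin p) ℝ, q.totalDegree ≤ δ →
      q ∈ Submodule.span ℝ (Set.range g))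
    (A A' : Matrix (Fin n) (Fin p) ℝ) (b b' : Fin p → ℝ)
    (hA : A.rank = p) (hA' : A'.rank = p) :
    (LinearMap.ker Aᵀ.mulVecLin = LinearMap.ker A'ᵀ.mulVecLin ↔
        ∃ S : Matrix (Fin p) (Fin p) ℝ, IsUnit S ∧ A' = A * S) ∧
      (LinearMap.ker Aᵀ.mulVecLin = LinearMap.ker A'ᵀ.mulVecLin ↔
        Submodule.span ℝ
            (Set.range fun i => fun x : Fin n → ℝ => MvPolynomial.eval (Aᵀ *ᵥ x + b) (g i)) =
          Submodule.span ℝ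
            (Set.range fun i => fun x : Fin n → ℝ => MvPolynomial.eval (A'ᵀ *ᵥ x + b') (g i))) := by
  have iff1 : LinearMap.ker Aᵀ.mulVecLin = LinearMap.ker A'ᵀ.mulVecLin ↔
      ∃ S : Matrix (Fin p) (Fin p) ℝ, IsUnit S ∧ A' = A * S :=
    ⟨ker_eq_imp_exists n p A A' hA hA',
     fun ⟨S, hS, hAS⟩ => exists_imp_ker_eq n p A A' S hS hAS⟩
  refine ⟨iff1, ?_, ?_⟩
  · intro hker
    obtain ⟨S, hS, hAS⟩ := iff1.mp hker
    obtain ⟨S', hS', hAS'⟩ := ker_eq_imp_exists n p A' A hA' hA hker.symm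
    exact le_antisymm (span_le_of_mul n p δ g hdeg hgspan A' A b' b S' hAS')
      (span_le_of_mul n p δ g hdeg hgspan A A' b b' S hAS)
  · intro hspan
    exact le_antisymm (ker_le_of_span_le n p δ hδ g hgspan A A' b b' hspan.ge)
      (ker_le_of_span_le n p δ hδ g hgspan A' A b' b hspan.le)
end

section
/- Fix integers n ≥ p ≥ 1 and δ ≥ 1. Let Q be a probability measure on ℝ^n that is absolutely continuous with respect to Lebesgue measure and satisfies ∫ ‖x‖^{2δ} dQ(x) < ∞, and let f ∈ L²_Q. For A in the Stiefel manifold V_p(ℝ^n) = {A ∈ ℝ^{n×p} : AᵀA = I_p}, define φ_{A,i}(x) = g_i(Aᵀx). Then there exists a minimizer (A*, β*) ∈ V_p(ℝ^n) × ℝ^m of the map (A, β) ↦ ‖f − Σ_{i=1}^m β_i φ_{A,i}‖_{L²_Q}. -/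
open Matrix MeasureTheory

open scoped ENNReal

lemma poly_null : ∀ {k : ℕ} (q : MvPolynomial (Fin k) ℝ), q ≠ 0 →
    volume {x : Fin k → ℝ | MvPolynomial.eval x q = 0} = 0 := by
  intro k
  induction k with
  | zero =>
    intro q hq
    obtain ⟨c, rfl⟩ := MvPolynomial.C_surjective (Fin 0) q
    have hc : c ≠ 0 := by simpa using hq
    convert measure_empty
    · ext x; simp [hc]
    · infer_instance
  | succ n ih =>
    intro q hq
    set e := MeasurableEquiv.piFinSuccAbove (fun _ : Fin (n+1) => ℝ) 0 with he
    have hmp := measurePreserving_piFinSuccAbove (fun _ : Fin (n+1) => (volume : Measure ℝ)) 0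
    set Z : Set (Fin (n+1) → ℝ) := {x | MvPolynomial.eval x q = 0} with hZ
    set P : (Fin n → ℝ) → Polynomial ℝ :=
      fun s => Polynomial.map (MvPolynomial.eval s) (MvPolynomial.finSuccEquiv ℝ n q) with hP
    have hsymm : ∀ y (s : Fin n → ℝ), e.symm (y, s) = Fin.cons y s := by
      intro y s
      simp [he, MeasurableEquiv.piFinSuccAbove, Fin.insertNthEquiv, Fin.insertNth_zero']
    have hpre : e.symm ⁻¹' Z = {p : ℝ × (Fin n → ℝ) | Polynomial.eval p.1 (P p.2) = 0} := by
      ext ⟨y, s⟩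
      simp only [Set.mem_preimage, hZ, Set.mem_setOf_eq, hsymm]
      rw [MvPolynomial.eval_eq_eval_mv_eval']
    have key : (volume : Measure (Fin (n+1) → ℝ)) Z
        = ((volume : Measure ℝ).prod (volume : Measure (Fin n → ℝ))) (e.symm ⁻¹' Z) := by
      have : Z = e ⁻¹' (e.symm ⁻¹' Z) := by
        ext x; simp
      rw [this]
      rw [show (volume : Measure (Fin (n+1) → ℝ)) = Measure.pi fun _ => volume from volume_pi,
        show (volume : Measure (Fin n → ℝ)) = Measure.pi fun _ => volume from volume_pi]
      exact hmp.measure_preimage_equiv _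
    have hZm : MeasurableSet Z :=
      (isClosed_singleton.preimage (MvPolynomial.continuous_eval q)).measurableSet
    rw [key]
    -- find a nonzero coefficient
    have hne : MvPolynomial.finSuccEquiv ℝ n q ≠ 0 := by
      intro h; exact hq (by simpa using congrArg (MvPolynomial.finSuccEquiv ℝ n).symm h)
    obtain ⟨j, hj⟩ : ∃ j, (MvPolynomial.finSuccEquiv ℝ n q).coeff j ≠ 0 := by
      by_contra h
      push_neg at h
      exact hne (Polynomial.ext fun j => by simp [h j])
    have hae : ∀ᵐ s : Fin n → ℝ, P s ≠ 0 := by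
      have h0 := ih _ hj
      rw [MeasureTheory.ae_iff]
      refine measure_mono_null ?_ h0
      intro s hs
      simp only [Set.mem_setOf_eq, not_not] at hs ⊢
      have := congrArg (fun r => r.coeff j) hs
      simpa [hP, Polynomial.coeff_map] using this
    have hZm' : MeasurableSet (e.symm ⁻¹' Z) := e.symm.measurable hZm
    rw [Measure.prod_apply_symm hZm']
    rw [lintegral_eq_zero_iff]
    · filter_upwards [hae] with s hs
      have : (fun y => (y, s)) ⁻¹' (⇑e.symm ⁻¹' Z) = {y : ℝ | Polynomial.IsRoot (P s) y} := by
        ext y; simp [hpre, Polynomial.IsRoot]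
      rw [this]
      exact Set.Finite.measure_zero (Polynomial.finite_setOf_isRoot hs) volume
    · exact measurable_measure_prodMk_right hZm' 


lemma pow_le_one_add_pow {t : ℝ} (ht : 0 ≤ t) {k δ : ℕ} (hk : k ≤ δ) :
    t ^ k ≤ 1 + t ^ δ := by
  rcases le_total t 1 with h | h
  · calc t ^ k ≤ 1 ^ k := pow_le_pow_left₀ ht h k
    _ = 1 := one_pow k
    _ ≤ 1 + t ^ δ := le_add_of_nonneg_right (pow_nonneg ht δ)
  · calc t ^ k ≤ t ^ δ := pow_le_pow_right₀ h hk
    _ ≤ 1 + t ^ δ := le_add_of_nonneg_left one_pos.le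

lemma poly_bound {p δ : ℕ} (q : MvPolynomial (Fin p) ℝ) (hq : q.totalDegree ≤ δ) :
    ∃ C : ℝ, 0 ≤ C ∧ ∀ y : Fin p → ℝ, |MvPolynomial.eval y q| ≤ C * (1 + ‖y‖ ^ δ) := by
  classical
  refine ⟨∑ d ∈ q.support, |q.coeff d|, Finset.sum_nonneg fun _ _ => abs_nonneg _, fun y => ?_⟩
  rw [MvPolynomial.eval_eq]
  refine (Finset.abs_sum_le_sum_abs _ _).trans ?_
  rw [Finset.sum_mul]
  refine Finset.sum_le_sum fun d hd => ?_
  rw [abs_mul]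
  refine mul_le_mul_of_nonneg_left ?_ (abs_nonneg _)
  · -- |∏ y i ^ d i| ≤ 1 + ‖y‖ ^ δ
    rw [Finset.abs_prod]
    calc ∏ i ∈ d.support, |y i ^ d i| ≤ ∏ i ∈ d.support, ‖y‖ ^ d i := by
          refine Finset.prod_le_prod (fun _ _ => abs_nonneg _) fun i _ => ?_
          rw [abs_pow]
          exact pow_le_pow_left₀ (abs_nonneg _) (norm_le_pi_norm y i) _
      _ = ‖y‖ ^ (∑ i ∈ d.support, d i) := by rw [Finset.prod_pow_eq_pow_sum]
      _ ≤ 1 + ‖y‖ ^ δ := by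
          refine pow_le_one_add_pow (norm_nonneg _) ?_
          refine le_trans ?_ hq
          refine le_trans ?_ (MvPolynomial.le_totalDegree hd)
          simp [Finsupp.sum]

lemma stiefel_entry  {n p : ℕ} {A : Matrix (Fin n) (Fin p) ℝ} (hA : Aᵀ * A = 1)
    (i : Fin n) (j : Fin p) : A i j ∈ Set.Icc (-1 : ℝ) 1 := by
  have h1 : (Aᵀ * A) j j = 1 := by rw [hA]; simp
  rw [Matrix.mul_apply] at h1
  simp only [Matrix.transpose_apply] at h1
  have hle : A i j * A i j ≤ 1 := by
    rw [← h1]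
    exact Finset.single_le_sum (fun k _ => mul_self_nonneg (A k j)) (Finset.mem_univ i)
  rw [Set.mem_Icc]
  constructor <;> nlinarith

lemma stiefel_compact {n p : ℕ} :
    IsCompact {A : Matrix (Fin n) (Fin p) ℝ | Aᵀ * A = 1} := by
  have hclosed : IsClosed {A : Matrix (Fin n) (Fin p) ℝ | Aᵀ * A = 1} := by
    have : Continuous fun A : Matrix (Fin n) (Fin p) ℝ => Aᵀ * A :=
      (continuous_id.matrix_transpose).matrix_mul continuous_id
    exact isClosed_singleton.preimage this
  have hcpt : IsCompact ((Set.univ.pi fun _ : Fin n => Set.univ.pi fun _ : Fin p =>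
      Set.Icc (-1:ℝ) 1) : Set (Matrix (Fin n) (Fin p) ℝ)) :=
    isCompact_univ_pi fun _ => isCompact_univ_pi fun _ => isCompact_Icc
  refine IsCompact.of_isClosed_subset hcpt hclosed ?_
  intro A hA
  refine Set.mem_univ_pi.2 fun i => Set.mem_univ_pi.2 fun j => stiefel_entry hA i j

lemma stiefel_nonempty {n p : ℕ} (hnp : p ≤ n) :
    ∃ A : Matrix (Fin n) (Fin p) ℝ, Aᵀ * A = 1 := by
  classical
  refine ⟨Matrix.of fun i j => if (i : ℕ) = (j : ℕ) then 1 else 0, ?_⟩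
  ext j k
  rw [Matrix.mul_apply]
  simp only [Matrix.transpose_apply, Matrix.of_apply]
  rcases eq_or_ne j k with rfl | hjk
  · rw [Matrix.one_apply_eq]
    rw [Finset.sum_eq_single (Fin.castLE hnp j)]
    · simp
    · intro i _ hi
      have : (i : ℕ) ≠ (j : ℕ) := by
        intro h; apply hi; apply Fin.ext; simpa using h
      simp [this]
    · simp
  · rw [Matrix.one_apply_ne hjk]
    refine Finset.sum_eq_zero fun i _ => ?_
    rcases eq_or_ne (i : ℕ) (j : ℕ) with h1 | h1
    · have : (i : ℕ) ≠ (k : ℕ) := by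
        rw [h1]; exact fun h => hjk (Fin.ext h)
      simp [this]
    · simp [h1]


section
variable {n p δ m : ℕ}

noncomputable def sfun (g : Fin m → MvPolynomial (Fin p) ℝ)
    (A : Matrix (Fin n) (Fin p) ℝ) (β : Fin m → ℝ) (x : Fin n → ℝ) : ℝ :=
  ∑ i, β i * MvPolynomial.eval (Aᵀ *ᵥ x) (g i)

lemma mulVec_norm_le (A : Matrix (Fin n) (Fin p) ℝ) {K : ℝ} (hK0 : 0 ≤ K)
    (hK : ∀ i j, |A i j| ≤ K) (x : Fin n → ℝ) : ‖Aᵀ *ᵥ x‖ ≤ (n : ℝ) * K * ‖x‖ := by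
  have hC : 0 ≤ (n : ℝ) * K * ‖x‖ :=
    mul_nonneg (mul_nonneg (Nat.cast_nonneg n) hK0) (norm_nonneg x)
  rw [pi_norm_le_iff_of_nonneg hC]
  intro j
  rw [Real.norm_eq_abs, Matrix.mulVec, dotProduct]
  calc |∑ i, Aᵀ j i * x i| ≤ ∑ i, |Aᵀ j i * x i| := Finset.abs_sum_le_sum_abs _ _
    _ ≤ ∑ _i : Fin n, K * ‖x‖ := by
        refine Finset.sum_le_sum fun i _ => ?_
        rw [abs_mul, Matrix.transpose_apply]
        have hxi : |x i| ≤ ‖x‖ := by rw [← Real.norm_eq_abs]; exact norm_le_pi_norm x i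
        exact mul_le_mul (hK i j) hxi (abs_nonneg _) hK0
    _ = (n : ℝ) * K * ‖x‖ := by
        rw [Finset.sum_const, Finset.card_univ, Fintype.card_fin, nsmul_eq_mul, mul_assoc]

lemma sfun_bound (g : Fin m → MvPolynomial (Fin p) ℝ) (hdeg : ∀ i, (g i).totalDegree ≤ δ) :
    ∃ C : ℝ, 0 ≤ C ∧ ∀ (K : ℝ), 0 ≤ K → ∀ (A : Matrix (Fin n) (Fin p) ℝ),
      (∀ i j, |A i j| ≤ K) → ∀ (B : ℝ), 0 ≤ B → ∀ (β : Fin m → ℝ), (∀ i, |β i| ≤ B) →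
      ∀ x : Fin n → ℝ,
      |sfun g A β x| ≤ C * B * (1 + ((n : ℝ) * K) ^ δ) * (1 + ‖x‖ ^ δ) := by
  choose C hC0 hC using fun i => poly_bound (g i) (hdeg i)
  refine ⟨∑ i, C i, Finset.sum_nonneg fun i _ => hC0 i, ?_⟩
  intro K hK0 A hA B hB0 β hβ x
  have hAx : ‖Aᵀ *ᵥ x‖ ≤ (n : ℝ) * K * ‖x‖ := mulVec_norm_le A hK0 hA x
  have hyδ : 1 + ‖Aᵀ *ᵥ x‖ ^ δ ≤ (1 + ((n : ℝ) * K) ^ δ) * (1 + ‖x‖ ^ δ) := by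
    have h1 : ‖Aᵀ *ᵥ x‖ ^ δ ≤ ((n : ℝ) * K) ^ δ * ‖x‖ ^ δ := by
      rw [← mul_pow]
      exact pow_le_pow_left₀ (norm_nonneg _) hAx δ
    have h2 : (0:ℝ) ≤ ((n : ℝ) * K) ^ δ :=
      pow_nonneg (mul_nonneg (Nat.cast_nonneg n) hK0) δ
    have h3 : (0:ℝ) ≤ ‖x‖ ^ δ := pow_nonneg (norm_nonneg _) δ
    nlinarith
  calc |sfun g A β x| ≤ ∑ i, |β i * MvPolynomial.eval (Aᵀ *ᵥ x) (g i)| :=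
        Finset.abs_sum_le_sum_abs _ _
    _ ≤ ∑ i, B * (C i * (1 + ‖Aᵀ *ᵥ x‖ ^ δ)) := by
        refine Finset.sum_le_sum fun i _ => ?_
        rw [abs_mul]
        exact mul_le_mul (hβ i) (hC i _) (abs_nonneg _) hB0
    _ = (∑ i, C i) * B * (1 + ‖Aᵀ *ᵥ x‖ ^ δ) := by
        conv_rhs => rw [Finset.sum_mul, Finset.sum_mul]
        refine Finset.sum_congr rfl fun i _ => by ring
    _ ≤ (∑ i, C i) * B * ((1 + ((n : ℝ) * K) ^ δ) * (1 + ‖x‖ ^ δ)) := by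
        refine mul_le_mul_of_nonneg_left hyδ ?_
        exact mul_nonneg (Finset.sum_nonneg fun i _ => hC0 i) hB0
    _ = (∑ i, C i) * B * (1 + ((n : ℝ) * K) ^ δ) * (1 + ‖x‖ ^ δ) := by ring

lemma sfun_continuous_x (g : Fin m → MvPolynomial (Fin p) ℝ)
    (A : Matrix (Fin n) (Fin p) ℝ) (β : Fin m → ℝ) :
    Continuous (sfun g A β) := by
  refine continuous_finset_sum _ fun i _ => Continuous.mul continuous_const ?_
  refine (MvPolynomial.continuous_eval _).comp (continuous_pi fun j => ?_)
  have : (fun x : Fin n → ℝ => (Aᵀ *ᵥ x) j) = fun x => ∑ k, Aᵀ j k * x k := by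
    funext x; rw [Matrix.mulVec, dotProduct]
  rw [this]
  exact continuous_finset_sum _ fun k _ => continuous_const.mul (continuous_apply k)

variable (Q : Measure (Fin n → ℝ)) [IsProbabilityMeasure Q]

lemma memlp_base (hmom : Integrable (fun x : Fin n → ℝ => ‖x‖ ^ (2 * δ)) Q) :
    MemLp (fun x : Fin n → ℝ => 1 + ‖x‖ ^ δ) 2 Q := by
  rw [memLp_two_iff_integrable_sq]
  · refine Integrable.mono' ((integrable_const (2:ℝ)).add (hmom.const_mul 2)) ?_ ?_
    · exact ((continuous_const.add ((continuous_norm).pow δ)).pow 2).aestronglyMeasurable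
    · refine Filter.Eventually.of_forall fun x => ?_
      have h : (0:ℝ) ≤ ‖x‖ ^ δ := pow_nonneg (norm_nonneg _) δ
      rw [Real.norm_eq_abs, abs_of_nonneg (by positivity)]
      have : ‖x‖ ^ (2 * δ) = (‖x‖ ^ δ) ^ 2 := by rw [← pow_mul, mul_comm]
      rw [Pi.add_apply]
      rw [show (2:ℝ) * ‖x‖ ^ (2 * δ) = 2 * (‖x‖ ^ δ)^2 by rw [← pow_mul, mul_comm δ 2]]
      nlinarith [sq_nonneg (1 - ‖x‖ ^ δ)]
  · exact (continuous_const.add ((continuous_norm).pow δ)).aestronglyMeasurable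

lemma memlp_sfun (g : Fin m → MvPolynomial (Fin p) ℝ) (hdeg : ∀ i, (g i).totalDegree ≤ δ)
    (hmom : Integrable (fun x : Fin n → ℝ => ‖x‖ ^ (2 * δ)) Q)
    (A : Matrix (Fin n) (Fin p) ℝ) (β : Fin m → ℝ) :
    MemLp (sfun g A β) 2 Q := by
  obtain ⟨C, hC0, hC⟩ := sfun_bound g hdeg (n := n)
  set K : ℝ := 1 + ∑ i, ∑ j, |A i j| with hKdef
  have hK0 : 0 ≤ K := by positivity
  have hKe : ∀ i j, |A i j| ≤ K := by
    intro i j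
    rw [hKdef]
    have h1 : |A i j| ≤ ∑ j', |A i j'| :=
      Finset.single_le_sum (f := fun j' => |A i j'|) (fun k _ => abs_nonneg _) (Finset.mem_univ j)
    have h2 : (∑ j', |A i j'|) ≤ ∑ i', ∑ j', |A i' j'| :=
      Finset.single_le_sum (f := fun i' => ∑ j', |A i' j'|)
        (fun k _ => Finset.sum_nonneg fun _ _ => abs_nonneg _) (Finset.mem_univ i)
    linarith
  set B : ℝ := 1 + ∑ i, |β i| with hBdef
  have hB0 : 0 ≤ B := by positivity
  have hBe : ∀ i, |β i| ≤ B := by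
    intro i
    rw [hBdef]
    have := Finset.single_le_sum (f := fun i => |β i|) (fun k _ => abs_nonneg _)
      (Finset.mem_univ i)
    linarith
  set M : ℝ := C * B * (1 + ((n : ℝ) * K) ^ δ) with hMdef
  have hM0 : 0 ≤ M := by
    have : (0:ℝ) ≤ ((n : ℝ) * K) ^ δ := pow_nonneg (by positivity) δ
    positivity
  refine MemLp.of_le ((memlp_base Q hmom).const_mul M)
    (sfun_continuous_x g A β).aestronglyMeasurable ?_
  refine Filter.Eventually.of_forall fun x => ?_
  rw [Real.norm_eq_abs, Real.norm_eq_abs]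
  refine (hC K hK0 A hKe B hB0 β hBe x).trans ?_
  rw [← hMdef]
  exact le_abs_self _
attribute [local instance] Matrix.normedAddCommGroup

lemma entry_dist (A B : Matrix (Fin n) (Fin p) ℝ) (i : Fin n) (j : Fin p) :
  |A i j - B i j| ≤ dist A B := by
  rw [dist_eq_norm, ← Real.norm_eq_abs]
  exact (Matrix.norm_entry_le_entrywise_sup_norm (A - B)).trans_eq (by simp)

lemma sfun_continuous_Aβ (g : Fin m → MvPolynomial (Fin p) ℝ) (x : Fin n → ℝ) :
    Continuous fun Aβ : Matrix (Fin n) (Fin p) ℝ × (Fin m → ℝ) =>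
      sfun g Aβ.1 Aβ.2 x := by
  refine continuous_finset_sum _ fun i _ => Continuous.mul ?_ ?_
  · exact (continuous_apply i).comp continuous_snd
  · refine (MvPolynomial.continuous_eval _).comp (continuous_pi fun j => ?_)
    have : (fun Aβ : Matrix (Fin n) (Fin p) ℝ × (Fin m → ℝ) => (Aβ.1ᵀ *ᵥ x) j)
        = fun Aβ => ∑ k, Aβ.1 k j * x k := by
      funext Aβ; rw [Matrix.mulVec, dotProduct]; rfl
    rw [this]
    refine continuous_finset_sum _ fun k _ => Continuous.mul ?_ continuous_const
    exact ((continuous_apply j).comp ((continuous_apply k).comp continuous_fst))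

variable (Q : Measure (Fin n → ℝ)) [IsProbabilityMeasure Q]

lemma J_continuous (g : Fin m → MvPolynomial (Fin p) ℝ) (hdeg : ∀ i, (g i).totalDegree ≤ δ)
    (hmom : Integrable (fun x : Fin n → ℝ => ‖x‖ ^ (2 * δ)) Q)
    (f : (Fin n → ℝ) → ℝ) (hf : MemLp f 2 Q) :
    Continuous fun Aβ : Matrix (Fin n) (Fin p) ℝ × (Fin m → ℝ) =>
      ∫ x, (f x - sfun g Aβ.1 Aβ.2 x) ^ 2 ∂Q := by
  rw [continuous_iff_continuousAt]
  intro Aβ₀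
  obtain ⟨C, hC0, hC⟩ := sfun_bound g hdeg (n := n)
  set K : ℝ := ‖Aβ₀.1‖ + 1 with hKdef
  set B : ℝ := ‖Aβ₀.2‖ + 1 with hBdef
  have hK0 : 0 ≤ K := by positivity
  have hB0 : 0 ≤ B := by positivity
  set M : ℝ := C * B * (1 + ((n : ℝ) * K) ^ δ) with hMdef
  have hM0 : 0 ≤ M := by
    have : (0:ℝ) ≤ ((n : ℝ) * K) ^ δ := pow_nonneg (by positivity) δ
    positivity
  have hmemD : MemLp (fun x => |f x| + M * (1 + ‖x‖ ^ δ)) 2 Q :=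
    hf.abs.add ((memlp_base Q hmom).const_mul M)
  have hboundint : Integrable (fun x => (|f x| + M * (1 + ‖x‖ ^ δ)) ^ 2) Q := by
    rw [← memLp_two_iff_integrable_sq hmemD.aestronglyMeasurable]
    exact hmemD
  haveI : FirstCountableTopology (Matrix (Fin n) (Fin p) ℝ × (Fin m → ℝ)) :=
    inferInstanceAs (FirstCountableTopology ((Fin n → Fin p → ℝ) × (Fin m → ℝ)))
  refine continuousAt_of_dominated ?_ ?_ hboundint ?_
  · refine Filter.Eventually.of_forall fun Aβ => ?_
    have hs : AEStronglyMeasurable (fun x => f x - sfun g Aβ.1 Aβ.2 x) Q :=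
      hf.aestronglyMeasurable.sub (sfun_continuous_x g Aβ.1 Aβ.2).aestronglyMeasurable
    exact hs.pow 2
  · refine (Metric.eventually_nhds_iff (α := Matrix (Fin n) (Fin p) ℝ × (Fin m → ℝ))).2 ?_
    refine ⟨1, one_pos, fun {Aβ} hAβ => ?_⟩
    refine Filter.Eventually.of_forall fun x => ?_
    have hdA : dist Aβ.1 Aβ₀.1 < 1 := lt_of_le_of_lt (le_trans (le_max_left _ _) le_rfl) (by
      calc max (dist Aβ.1 Aβ₀.1) (dist Aβ.2 Aβ₀.2) = dist Aβ Aβ₀ := rfl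
      _ < 1 := hAβ)
    have hdβ : dist Aβ.2 Aβ₀.2 < 1 := lt_of_le_of_lt (le_max_right (dist Aβ.1 Aβ₀.1) _) (by
      calc max (dist Aβ.1 Aβ₀.1) (dist Aβ.2 Aβ₀.2) = dist Aβ Aβ₀ := rfl
      _ < 1 := hAβ)
    have hKe : ∀ i j, |Aβ.1 i j| ≤ K := by
      intro i j
      have h1 := entry_dist Aβ.1 Aβ₀.1 i j
      have h2 : |Aβ₀.1 i j| ≤ ‖Aβ₀.1‖ := by
        rw [← Real.norm_eq_abs]; exact Matrix.norm_entry_le_entrywise_sup_norm Aβ₀.1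
      have h3 : |Aβ.1 i j| ≤ |Aβ.1 i j - Aβ₀.1 i j| + |Aβ₀.1 i j| := by
        calc |Aβ.1 i j| = |(Aβ.1 i j - Aβ₀.1 i j) + Aβ₀.1 i j| := by ring_nf
        _ ≤ _ := abs_add_le _ _
      rw [hKdef]; linarith
    have hBe : ∀ i, |Aβ.2 i| ≤ B := by
      intro i
      have h1 : |Aβ.2 i - Aβ₀.2 i| ≤ dist Aβ.2 Aβ₀.2 := by
        rw [dist_eq_norm, ← Real.norm_eq_abs]
        exact (norm_le_pi_norm (Aβ.2 - Aβ₀.2) i).trans_eq (by simp)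
      have h2 : |Aβ₀.2 i| ≤ ‖Aβ₀.2‖ := by
        rw [← Real.norm_eq_abs]; exact norm_le_pi_norm Aβ₀.2 i
      have h3 : |Aβ.2 i| ≤ |Aβ.2 i - Aβ₀.2 i| + |Aβ₀.2 i| := by
        calc |Aβ.2 i| = |(Aβ.2 i - Aβ₀.2 i) + Aβ₀.2 i| := by ring_nf
        _ ≤ _ := abs_add_le _ _
      rw [hBdef]; linarith
    have hsb : |sfun g Aβ.1 Aβ.2 x| ≤ M * (1 + ‖x‖ ^ δ) := by
      have := hC K hK0 Aβ.1 hKe B hB0 Aβ.2 hBe x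
      calc |sfun g Aβ.1 Aβ.2 x| ≤ C * B * (1 + ((n:ℝ) * K) ^ δ) * (1 + ‖x‖ ^ δ) := this
        _ = M * (1 + ‖x‖ ^ δ) := by rw [hMdef]
    rw [Real.norm_eq_abs, abs_of_nonneg (sq_nonneg _)]
    have h1 : |f x - sfun g Aβ.1 Aβ.2 x| ≤ |f x| + M * (1 + ‖x‖ ^ δ) :=
      (abs_sub _ _).trans (by linarith)
    calc (f x - sfun g Aβ.1 Aβ.2 x) ^ 2 = |f x - sfun g Aβ.1 Aβ.2 x| ^ 2 := (sq_abs _).symm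
      _ ≤ (|f x| + M * (1 + ‖x‖ ^ δ)) ^ 2 := by
          apply pow_le_pow_left₀ (abs_nonneg _) h1
  · refine Filter.Eventually.of_forall fun x => ?_
    exact ((continuous_const.sub (sfun_continuous_Aβ g x)).pow 2).continuousAt

lemma eLp_sqrt {h : (Fin n → ℝ) → ℝ} (hh : MemLp h 2 Q) :
    eLpNorm h 2 Q = ENNReal.ofReal (Real.sqrt (∫ x, (h x) ^ 2 ∂Q)) := by
  rw [hh.eLpNorm_eq_integral_rpow_norm two_ne_zero ENNReal.ofNat_ne_top]
  congr 1
  have h2 : ((2 : ℝ≥0∞)).toReal = (2 : ℝ) := by simp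
  rw [h2]
  have hint : (fun a => ‖h a‖ ^ (2:ℝ)) = fun a => (h a) ^ 2 := by
    funext a
    rw [Real.rpow_two, Real.norm_eq_abs, sq_abs]
  rw [hint, Real.sqrt_eq_rpow]
  norm_num

lemma sqrt_triangle {h₁ h₂ : (Fin n → ℝ) → ℝ} (hh₁ : MemLp h₁ 2 Q) (hh₂ : MemLp h₂ 2 Q) :
    Real.sqrt (∫ x, (h₁ x + h₂ x) ^ 2 ∂Q)
      ≤ Real.sqrt (∫ x, (h₁ x) ^ 2 ∂Q) + Real.sqrt (∫ x, (h₂ x) ^ 2 ∂Q) := by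
  have hsum : MemLp (h₁ + h₂) 2 Q := hh₁.add hh₂
  have e1 := eLp_sqrt Q hsum
  have e2 := eLp_sqrt Q hh₁
  have e3 := eLp_sqrt Q hh₂
  have tri : eLpNorm (h₁ + h₂) 2 Q ≤ eLpNorm h₁ 2 Q + eLpNorm h₂ 2 Q :=
    eLpNorm_add_le hh₁.aestronglyMeasurable hh₂.aestronglyMeasurable one_le_two
  have hfin₂ : eLpNorm h₁ 2 Q ≠ ⊤ := hh₁.eLpNorm_ne_top
  have hfin₃ : eLpNorm h₂ 2 Q ≠ ⊤ := hh₂.eLpNorm_ne_top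
  have := ENNReal.toReal_mono (by finiteness) tri
  rw [ENNReal.toReal_add hfin₂ hfin₃, e1, e2, e3,
    ENNReal.toReal_ofReal (Real.sqrt_nonneg _), ENNReal.toReal_ofReal (Real.sqrt_nonneg _),
    ENNReal.toReal_ofReal (Real.sqrt_nonneg _)] at this
  simpa using this

lemma pos_G (g : Fin m → MvPolynomial (Fin p) ℝ) (hdeg : ∀ i, (g i).totalDegree ≤ δ)
    (hgli : LinearIndependent ℝ g) (hac : Q ≪ volume)
    (hmom : Integrable (fun x : Fin n → ℝ => ‖x‖ ^ (2 * δ)) Q)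
    {A : Matrix (Fin n) (Fin p) ℝ} (hA : Aᵀ * A = 1) {β : Fin m → ℝ} (hβ : β ≠ 0) :
    0 < ∫ x, (sfun g A β x) ^ 2 ∂Q := by
  have hint : Integrable (fun x => (sfun g A β x) ^ 2) Q := by
    rw [← memLp_two_iff_integrable_sq (sfun_continuous_x g A β).aestronglyMeasurable]
    exact memlp_sfun Q g hdeg hmom A β
  rcases lt_or_eq_of_le (integral_nonneg (μ := Q) (f := fun x => (sfun g A β x) ^ 2) (fun x => sq_nonneg (sfun g A β x))) with h | h
  · exact h
  exfalso
  have hae : (fun x => (sfun g A β x) ^ 2) =ᵐ[Q] 0 :=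
    (integral_eq_zero_iff_of_nonneg (fun x => sq_nonneg _) hint).mp h.symm
  have hae' : ∀ᵐ x ∂Q, sfun g A β x = 0 := by
    filter_upwards [hae] with x hx
    exact pow_eq_zero_iff two_ne_zero |>.mp hx
  -- the polynomial q = ∑ β i • g i is nonzero
  set q : MvPolynomial (Fin p) ℝ := ∑ i, β i • g i with hq
  have hqne : q ≠ 0 := by
    intro h0
    apply hβ
    funext i
    exact Fintype.linearIndependent_iff.mp hgli β h0 i
  -- big polynomial on ℝ^n
  set L : Fin p → MvPolynomial (Fin n) ℝ :=
    fun j => ∑ i, MvPolynomial.C (A i j) * MvPolynomial.X i with hL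
  set bigQ : MvPolynomial (Fin n) ℝ := MvPolynomial.eval₂ MvPolynomial.C L q with hbigQ
  have hevalL : ∀ (x : Fin n → ℝ) (j : Fin p), MvPolynomial.eval x (L j) = (Aᵀ *ᵥ x) j := by
    intro x j
    rw [hL]
    simp only [map_sum, MvPolynomial.eval_mul, MvPolynomial.eval_C, MvPolynomial.eval_X]
    rw [Matrix.mulVec, dotProduct]
    exact Finset.sum_congr rfl fun i _ => by rw [Matrix.transpose_apply]
  have heval : ∀ x : Fin n → ℝ, MvPolynomial.eval x bigQ = sfun g A β x := by
    intro x
    rw [hbigQ, ← MvPolynomial.eval_assoc]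
    have : (MvPolynomial.eval x ∘ L) = fun j => (Aᵀ *ᵥ x) j := by
      funext j; exact hevalL x j
    rw [this, hq, map_sum]
    simp only [MvPolynomial.smul_eval]
    rfl
  have hbigne : bigQ ≠ 0 := by
    intro h0
    apply hqne
    apply MvPolynomial.funext
    intro y
    have h1 : MvPolynomial.eval (A *ᵥ y) bigQ = 0 := by rw [h0]; simp
    rw [hbigQ, ← MvPolynomial.eval_assoc] at h1
    have h2 : (MvPolynomial.eval (A *ᵥ y) ∘ L) = y := by
      funext j
      rw [Function.comp_apply, hevalL (A *ᵥ y) j, Matrix.mulVec_mulVec, hA, Matrix.one_mulVec]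
    rw [h2] at h1
    rw [h1]
    simp
  -- contradiction with Q probability
  have hnull1 : Q {x | MvPolynomial.eval x bigQ = 0} = 0 := hac (poly_null bigQ hbigne)
  have hnull2 : Q {x | sfun g A β x ≠ 0} = 0 := by
    rw [← MeasureTheory.ae_iff] at *
    simpa using hae'
  have : Q Set.univ ≤ Q {x | MvPolynomial.eval x bigQ = 0} + Q {x | sfun g A β x ≠ 0} := by
    refine le_trans (measure_mono ?_) (measure_union_le _ _)
    intro x _
    rcases eq_or_ne (sfun g A β x) 0 with h | h
    · left
      rw [Set.mem_setOf_eq, heval x, h]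
    · right; exact h
  rw [hnull1, hnull2, measure_univ] at this
  simp at this

end

/-- For a probability measure `Q` on `ℝ^n` absolutely continuous
with respect to Lebesgue measure with finite `2δ`-th moment, `f ∈ L²_Q`, and a
basis `g₁,…,g_m` of the polynomials of total degree at most `δ` on `ℝ^p`, the
polynomial feature-learning problem with linear dimensionality reduction admits
a minimizer `(A*, β*)` over the Stiefel manifold `V_p(ℝ^n) × ℝ^m`, where
`φ_{A,i}(x) = gᵢ(Aᵀx)`. -/
theorem stmt7 (n p δ m : ℕ) (hp : 1 ≤ p) (hnp : p ≤ n) (hδ : 1 ≤ δ)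
    (g : Fin m → MvPolynomial (Fin p) ℝ)
    (hdeg : ∀ i, (g i).totalDegree ≤ δ)
    (hgli : LinearIndependent ℝ g)
    (hgspan : ∀ q : MvPolynomial (Fin p) ℝ, q.totalDegree ≤ δ →
      q ∈ Submodule.span ℝ (Set.range g))
    (Q : Measure (Fin n → ℝ)) [IsProbabilityMeasure Q] (hac : Q ≪ volume)
    (hmom : Integrable (fun x : Fin n → ℝ => ‖x‖ ^ (2 * δ)) Q)
    (f : (Fin n → ℝ) → ℝ) (hf : MemLp f 2 Q) :
    ∃ A : Matrix (Fin n) (Fin p) ℝ, Aᵀ * A = 1 ∧ ∃ β : Fin m → ℝ,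
      ∀ A' : Matrix (Fin n) (Fin p) ℝ, A'ᵀ * A' = 1 → ∀ β' : Fin m → ℝ,
        eLpNorm (fun x => f x - ∑ i, β i * MvPolynomial.eval (Aᵀ *ᵥ x) (g i)) 2 Q ≤
          eLpNorm (fun x => f x - ∑ i, β' i * MvPolynomial.eval (A'ᵀ *ᵥ x) (g i)) 2 Q := by
  classical
  obtain ⟨A₀, hA₀⟩ := stiefel_nonempty (n := n) (p := p) hnp
  rcases Nat.eq_zero_or_pos m with hm | hm
  · subst hm
    exact ⟨A₀, hA₀, fun _ => 0, fun A' hA' β' => by simp⟩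
  haveI : Nonempty (Fin m) := ⟨⟨0, hm⟩⟩
  -- basic MemLp facts
  have hmemfs : ∀ (A : Matrix (Fin n) (Fin p) ℝ) (β : Fin m → ℝ),
      MemLp (fun x => f x - sfun g A β x) 2 Q :=
    fun A β => hf.sub (memlp_sfun Q g hdeg hmom A β)
  -- the two continuous objective functions
  set J : Matrix (Fin n) (Fin p) ℝ × (Fin m → ℝ) → ℝ :=
    fun Aβ => ∫ x, (f x - sfun g Aβ.1 Aβ.2 x) ^ 2 ∂Q with hJdef
  have hJcont : Continuous J := J_continuous Q g hdeg hmom f hf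
  set G : Matrix (Fin n) (Fin p) ℝ × (Fin m → ℝ) → ℝ :=
    fun Aβ => ∫ x, (sfun g Aβ.1 Aβ.2 x) ^ 2 ∂Q with hGdef
  have hGcont : Continuous G := by
    have h0 : MemLp (fun _ : Fin n → ℝ => (0:ℝ)) 2 Q := memLp_const 0
    have := J_continuous Q g hdeg hmom (fun _ => 0) h0
    refine this.congr fun Aβ => ?_
    congr 1
    funext x
    ring
  -- Stiefel manifold
  set S : Set (Matrix (Fin n) (Fin p) ℝ) := {A | Aᵀ * A = 1} with hSdef
  have hScpt : IsCompact S := stiefel_compact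
  -- minimum of G on S × sphere
  have hsphne : (Metric.sphere (0 : Fin m → ℝ) 1).Nonempty := by
    refine NormedSpace.sphere_nonempty.mpr ?_
    norm_num
  obtain ⟨v₀, hv₀⟩ := hsphne
  obtain ⟨u₀, hu₀mem, hu₀min⟩ := (hScpt.prod (isCompact_sphere (0 : Fin m → ℝ) 1)).exists_isMinOn
    ⟨(A₀, v₀), ⟨hA₀, hv₀⟩⟩ hGcont.continuousOn
  set c2 : ℝ := G u₀ with hc2def
  have hu₀S : u₀.1ᵀ * u₀.1 = 1 := hu₀mem.1
  have hu₀v : ‖u₀.2‖ = 1 := by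
    have := hu₀mem.2
    rwa [Metric.mem_sphere, dist_zero_right] at this
  have hc2pos : 0 < c2 := by
    refine pos_G Q g hdeg hgli hac hmom hu₀S ?_
    intro h0
    rw [h0] at hu₀v
    simp at hu₀v
  -- coercivity
  have hcoer : ∀ A ∈ S, ∀ β : Fin m → ℝ, c2 * ‖β‖ ^ 2 ≤ G (A, β) := by
    intro A hA β
    rcases eq_or_ne β 0 with rfl | hβ
    · simp [hGdef, sfun]
    · set u : Fin m → ℝ := ‖β‖⁻¹ • β with hu
      have hβn : (0:ℝ) < ‖β‖ := norm_pos_iff.mpr hβ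
      have hun : ‖u‖ = 1 := norm_smul_inv_norm hβ
      have hsc : ∀ x, sfun g A β x = ‖β‖ * sfun g A u x := by
        intro x
        rw [hu]
        simp only [sfun, Pi.smul_apply, smul_eq_mul, Finset.mul_sum]
        refine Finset.sum_congr rfl fun i _ => ?_
        have hne := hβn.ne'
        field_simp
      have hGeq : G (A, β) = ‖β‖ ^ 2 * G (A, u) := by
        rw [hGdef]
        simp only
        rw [← MeasureTheory.integral_const_mul]
        congr 1
        funext x
        rw [hsc x]
        ring
      have hGu : c2 ≤ G (A, u) := hu₀min (Set.mk_mem_prod hA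
        (by rw [Metric.mem_sphere, dist_zero_right]; exact hun))
      rw [hGeq]
      calc c2 * ‖β‖ ^ 2 = ‖β‖ ^ 2 * c2 := by ring
        _ ≤ ‖β‖ ^ 2 * G (A, u) := by
            refine mul_le_mul_of_nonneg_left hGu (sq_nonneg _)
  -- radius
  set c : ℝ := Real.sqrt c2 with hcdef
  have hcpos : 0 < c := Real.sqrt_pos.mpr hc2pos
  set Nf : ℝ := Real.sqrt (∫ x, (f x) ^ 2 ∂Q) with hNf
  have hNf0 : 0 ≤ Nf := Real.sqrt_nonneg _
  set R : ℝ := (2 * Nf + 1) / c with hRdef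
  have hR0 : 0 < R := by positivity
  -- minimize J on S × closedBall
  obtain ⟨w, hwmem, hwmin⟩ := (hScpt.prod (isCompact_closedBall (0 : Fin m → ℝ) R)).exists_isMinOn
    ⟨(A₀, 0), ⟨hA₀, Metric.mem_closedBall_self hR0.le⟩⟩ hJcont.continuousOn
  refine ⟨w.1, hwmem.1, w.2, ?_⟩
  intro A' hA' β'
  -- reduce to J
  have hkey : J w ≤ J (A', β') := by
    by_cases hβ' : ‖β'‖ ≤ R
    · exact hwmin (Set.mk_mem_prod hA' (by rwa [Metric.mem_closedBall, dist_zero_right]))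
    · push_neg at hβ'
      have h1 : J w ≤ J (A', 0) := hwmin (Set.mk_mem_prod hA' (Metric.mem_closedBall_self hR0.le))
      have h2 : J (A', 0) = ∫ x, (f x) ^ 2 ∂Q := by
        rw [hJdef]
        simp [sfun]
      -- lower bound for J (A', β')
      have hJ0 : 0 ≤ J (A', β') := integral_nonneg fun x => sq_nonneg _
      have htri : Real.sqrt (G (A', β')) ≤ Real.sqrt (J (A', β')) + Nf := by
        have hmem1 : MemLp (fun x => sfun g A' β' x - f x) 2 Q :=
          (memlp_sfun Q g hdeg hmom A' β').sub hf
        have := sqrt_triangle Q hmem1 hf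
        have heq1 : (fun x => (sfun g A' β' x - f x) + f x) = fun x => sfun g A' β' x := by
          funext x; ring
        have heq2 : ∫ x, (sfun g A' β' x - f x) ^ 2 ∂Q = J (A', β') := by
          rw [hJdef]; congr 1; funext x; ring
        rw [heq2] at this
        calc Real.sqrt (G (A', β'))
            = Real.sqrt (∫ x, ((sfun g A' β' x - f x) + f x) ^ 2 ∂Q) := by
              refine congrArg Real.sqrt ?_
              refine integral_congr_ae (Filter.Eventually.of_forall fun x => ?_)
              ring
          _ ≤ _ := this
      have hlow : c * ‖β'‖ ≤ Real.sqrt (G (A', β')) := by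
        have := hcoer A' hA' β'
        have h3 : Real.sqrt (c2 * ‖β'‖ ^ 2) ≤ Real.sqrt (G (A', β')) := Real.sqrt_le_sqrt this
        rwa [Real.sqrt_mul hc2pos.le, Real.sqrt_sq (norm_nonneg _), ← hcdef] at h3
      have hcR : c * R = 2 * Nf + 1 := by
        rw [hRdef]; field_simp
      have h4 : Nf + 1 ≤ Real.sqrt (J (A', β')) := by
        have h5 : c * R ≤ c * ‖β'‖ := mul_le_mul_of_nonneg_left hβ'.le hcpos.le
        rw [hcR] at h5
        linarith
      have h6 : ∫ x, (f x) ^ 2 ∂Q ≤ J (A', β') := by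
        have h7 : Nf ^ 2 ≤ Real.sqrt (J (A', β')) ^ 2 := by
          have : Nf ≤ Real.sqrt (J (A', β')) := by linarith
          exact pow_le_pow_left₀ hNf0 this 2
        rw [Real.sq_sqrt hJ0] at h7
        rw [hNf] at h7
        rwa [Real.sq_sqrt (integral_nonneg fun x => sq_nonneg _)] at h7
      linarith
  -- convert to eLpNorm
  have e1 : eLpNorm (fun x => f x - ∑ i, w.2 i * MvPolynomial.eval (w.1ᵀ *ᵥ x) (g i)) 2 Q
      = ENNReal.ofReal (Real.sqrt (J w)) := by
    rw [hJdef]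
    exact eLp_sqrt Q (hmemfs w.1 w.2)
  have e2 : eLpNorm (fun x => f x - ∑ i, β' i * MvPolynomial.eval (A'ᵀ *ᵥ x) (g i)) 2 Q
      = ENNReal.ofReal (Real.sqrt (J (A', β'))) := by
    rw [hJdef]
    exact eLp_sqrt Q (hmemfs A' β')
  rw [e1, e2]
  exact ENNReal.ofReal_le_ofReal (Real.sqrt_le_sqrt hkey)
end

section
/- Let Q be the standard normal measure N(0, 1) on ℝ and f(x) = 1_{[0,∞)}(x). For parameters θ = ((a_1, b_1), (a_2, b_2)) with (a_i, b_i) in the unit circle S_1 of ℝ² and β ∈ ℝ², consider the error E(θ, β) = ‖f − β_1 φ_{(a_1,b_1)} − β_2 φ_{(a_2,b_2)}‖_{L²_Q}, where φ_{(a,b)}(x) = (a x + b)⁺. Then inf over (θ, β) of E(θ, β) = 0, but the infimum is not attained: E(θ, β) > 0 for every ((a_1,b_1),(a_2,b_2)) ∈ S_1 × S_1 and β ∈ ℝ². Hence the shallow ReLU feature-learning problem admits no minimizer in general. -/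
open MeasureTheory ProbabilityTheory
open scoped ENNReal

open Filter Set Topology


lemma stmt13_pos (a₁ b₁ a₂ b₂ β₁ β₂ : ℝ) :
    0 < eLpNorm (fun x : ℝ => (if 0 ≤ x then (1 : ℝ) else 0)
          - β₁ * max (a₁ * x + b₁) 0 - β₂ * max (a₂ * x + b₂) 0) 2 (gaussianReal 0 1) := by
  set F : ℝ → ℝ := fun x => (if 0 ≤ x then (1 : ℝ) else 0)
          - β₁ * max (a₁ * x + b₁) 0 - β₂ * max (a₂ * x + b₂) 0 with hF
  rw [pos_iff_ne_zero]
  intro h0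
  have hmeas : AEStronglyMeasurable F (gaussianReal 0 1) := by
    apply Measurable.aestronglyMeasurable
    apply Measurable.sub
    apply Measurable.sub
    · exact measurable_const.ite measurableSet_Ici measurable_const
    · fun_prop
    · fun_prop
  rw [eLpNorm_eq_zero_iff hmeas two_ne_zero] at h0
  have h0' : F =ᵐ[volume] 0 :=
    (gaussianReal_absolutelyContinuous' 0 one_ne_zero).ae_le h0
  set g : ℝ → ℝ := fun x => β₁ * max (a₁ * x + b₁) 0 + β₂ * max (a₂ * x + b₂) 0 with hg
  have hgc : ContinuousAt g 0 := by fun_prop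
  obtain ⟨δ, hδ, hball⟩ := Metric.continuousAt_iff.mp hgc (1/2) (by norm_num)
  have hN : volume {x : ℝ | ¬ F x = 0} = 0 := h0'
  have key : ∀ s : Set ℝ, volume s ≠ 0 → ∃ x ∈ s, F x = 0 := by
    intro s hs
    by_contra hc
    push_neg at hc
    exact hs (measure_mono_null (fun x hx => hc x hx) hN)
  obtain ⟨x, hx, hFx⟩ := key (Ioo 0 δ) (by
    rw [Real.volume_Ioo]; simp [hδ.le]; linarith)
  obtain ⟨y, hy, hFy⟩ := key (Ioo (-δ) 0) (by
    rw [Real.volume_Ioo]; simp; linarith)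
  have hgx : g x = 1 := by
    have := hFx
    simp only [hF, hg] at this ⊢
    rw [if_pos hx.1.le] at this
    linarith
  have hgy : g y = 0 := by
    have := hFy
    simp only [hF, hg] at this ⊢
    rw [if_neg (not_le.mpr hy.2)] at this
    linarith
  have h1 : |g x - g 0| < 1/2 := by
    have := hball (show dist x (0:ℝ) < δ by
      rw [Real.dist_eq, sub_zero, abs_of_pos hx.1]; exact hx.2)
    rwa [Real.dist_eq] at this
  have h2 : |g y - g 0| < 1/2 := by
    have := hball (show dist y (0:ℝ) < δ by
      rw [Real.dist_eq, sub_zero, abs_of_neg hy.2]; linarith [hy.1])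
    rwa [Real.dist_eq] at this
  rw [hgx] at h1; rw [hgy] at h2
  rw [abs_lt] at h1 h2
  linarith [h1.1, h1.2, h2.1, h2.2]

lemma stmt13_bound (t : ℝ) (ht : 0 < t) (x : ℝ) :
    ‖(if 0 ≤ x then (1:ℝ) else 0) - max (t * x + 1) 0 + max (t * x) 0‖
      ≤ ‖(Ioo (-(1/t)) 0).indicator (fun _ => (1:ℝ)) x‖ := by
  rcases le_or_gt 0 x with hx | hx
  · rw [if_pos hx, max_eq_left (by nlinarith : (0:ℝ) ≤ t * x + 1),
      max_eq_left (by nlinarith : (0:ℝ) ≤ t * x)]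
    simp [norm_nonneg]
  · rw [if_neg (not_le.mpr hx),
      show max (t * x) 0 = 0 from max_eq_right (by nlinarith)]
    rcases le_or_gt (t * x + 1) 0 with h | h
    · rw [max_eq_right h]
      simp [norm_nonneg]
    · rw [max_eq_left h.le, Set.indicator_of_mem (by
        refine ⟨?_, hx⟩
        rw [neg_lt, lt_div_iff₀ ht]
        nlinarith)]
      rw [Real.norm_eq_abs, Real.norm_eq_abs, abs_one, abs_le]
      constructor <;> nlinarith

/-- membership of the approximation error in the set, with bound -/
lemma stmt13_mem (t : ℝ) (ht : 0 < t) :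
    ∃ a₁ b₁ a₂ b₂ β₁ β₂ : ℝ, a₁ ^ 2 + b₁ ^ 2 = 1 ∧ a₂ ^ 2 + b₂ ^ 2 = 1 ∧
      (fun x : ℝ => (if 0 ≤ x then (1 : ℝ) else 0)
          - β₁ * max (a₁ * x + b₁) 0 - β₂ * max (a₂ * x + b₂) 0)
        = fun x : ℝ => (if 0 ≤ x then (1:ℝ) else 0) - max (t * x + 1) 0 + max (t * x) 0 := by
  set c : ℝ := Real.sqrt (t^2 + 1) with hc
  have hc2 : c ^ 2 = t ^ 2 + 1 := Real.sq_sqrt (by positivity)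
  have hcpos : 0 < c := Real.sqrt_pos.mpr (by positivity)
  refine ⟨t / c, 1 / c, 1, 0, c, -t, ?_, by norm_num, ?_⟩
  · field_simp
    linarith
  · funext x
    have h1 : c * max (t / c * x + 1 / c) 0 = max (t * x + 1) 0 := by
      rw [mul_max_of_nonneg _ _ hcpos.le]
      congr 1
      · field_simp
      · ring
    have h2 : (-t) * max (1 * x + 0) 0 = - max (t * x) 0 := by
      rw [one_mul, add_zero, neg_mul, mul_max_of_nonneg _ _ ht.le, mul_zero]
    rw [h1, h2]
    ring

/-- For the standard Gaussian measure `Q = N(0,1)` on `ℝ` and the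
target `f = 1_{[0,∞)}`, the shallow ReLU feature-learning problem with `m = 2`
nodes has infimum error `0` over parameters `((a₁,b₁),(a₂,b₂)) ∈ S₁ × S₁` and
`β ∈ ℝ²`, yet the error is strictly positive for every admissible choice, so no
minimizer exists. -/
theorem stmt13 :
    sInf {r : ℝ≥0∞ | ∃ a₁ b₁ a₂ b₂ β₁ β₂ : ℝ, a₁ ^ 2 + b₁ ^ 2 = 1 ∧ a₂ ^ 2 + b₂ ^ 2 = 1 ∧
        r = eLpNorm (fun x : ℝ => (if 0 ≤ x then (1 : ℝ) else 0)
              - β₁ * max (a₁ * x + b₁) 0 - β₂ * max (a₂ * x + b₂) 0) 2 (gaussianReal 0 1)} = 0 ∧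
      ∀ a₁ b₁ a₂ b₂ β₁ β₂ : ℝ, a₁ ^ 2 + b₁ ^ 2 = 1 → a₂ ^ 2 + b₂ ^ 2 = 1 →
        0 < eLpNorm (fun x : ℝ => (if 0 ≤ x then (1 : ℝ) else 0)
              - β₁ * max (a₁ * x + b₁) 0 - β₂ * max (a₂ * x + b₂) 0) 2 (gaussianReal 0 1) := by
  constructor
  · set Q := gaussianReal 0 1 with hQ
    set S := {r : ℝ≥0∞ | ∃ a₁ b₁ a₂ b₂ β₁ β₂ : ℝ, a₁ ^ 2 + b₁ ^ 2 = 1 ∧ a₂ ^ 2 + b₂ ^ 2 = 1 ∧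
        r = eLpNorm (fun x : ℝ => (if 0 ≤ x then (1 : ℝ) else 0)
              - β₁ * max (a₁ * x + b₁) 0 - β₂ * max (a₂ * x + b₂) 0) 2 Q} with hS
    set A : ℕ → Set ℝ := fun n => Ioo (-(1/((n:ℝ)+1))) 0 with hA
    -- sInf S ≤ (Q (A n)) ^ (1/2) for each n
    have hle : ∀ n : ℕ, sInf S ≤ (Q (A n)) ^ (1/2 : ℝ) := by
      intro n
      have htpos : (0:ℝ) < (n:ℝ) + 1 := by positivity
      obtain ⟨a₁, b₁, a₂, b₂, β₁, β₂, h1, h2, heq⟩ := stmt13_mem ((n:ℝ)+1) htpos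
      refine le_trans (sInf_le ⟨a₁, b₁, a₂, b₂, β₁, β₂, h1, h2, rfl⟩) ?_
      rw [heq]
      calc eLpNorm (fun x : ℝ => (if 0 ≤ x then (1:ℝ) else 0)
              - max (((n:ℝ)+1) * x + 1) 0 + max (((n:ℝ)+1) * x) 0) 2 Q
          ≤ eLpNorm ((A n).indicator (fun _ => (1:ℝ))) 2 Q :=
            eLpNorm_mono (fun x => stmt13_bound _ htpos x)
        _ = ‖(1:ℝ)‖₊ * Q (A n) ^ (1 / (2:ℝ≥0∞).toReal) :=
            eLpNorm_indicator_const measurableSet_Ioo two_ne_zero ENNReal.ofNat_ne_top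
        _ = Q (A n) ^ (1/2 : ℝ) := by norm_num
    -- Q (A n) → 0
    have htend : Tendsto (fun n => Q (A n)) atTop (𝓝 0) := by
      have h0 : (⋂ n, A n) = ∅ := by
        ext x
        simp only [mem_iInter, mem_Ioo, mem_empty_iff_false, iff_false, not_forall]
        by_cases hx : x < 0
        · obtain ⟨n, hn⟩ := exists_nat_gt (1 / (-x))
          refine ⟨n, fun h => ?_⟩
          have hx' : 0 < -x := by linarith
          have : 1 / ((n:ℝ)+1) < -x := by
            rw [div_lt_iff₀ (by positivity)]
            rw [div_lt_iff₀ hx'] at hn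
            nlinarith
          linarith [h.1]
        · exact ⟨0, fun h => hx h.2⟩
      have := tendsto_measure_iInter_atTop (μ := Q) (s := A)
        (fun n => measurableSet_Ioo.nullMeasurableSet)
        (fun m n hmn => Ioo_subset_Ioo (by
          simp only [neg_le_neg_iff]
          apply one_div_le_one_div_of_le (by positivity)
          have : (m:ℝ) ≤ (n:ℝ) := Nat.cast_le.mpr hmn
          linarith) le_rfl)
        ⟨0, measure_ne_top Q _⟩
      rwa [h0, measure_empty] at this
    -- conclude
    have h2 : ∀ n, sInf S ^ (2:ℝ) ≤ Q (A n) := by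
      intro n
      calc sInf S ^ (2:ℝ) ≤ ((Q (A n)) ^ (1/2:ℝ)) ^ (2:ℝ) :=
            ENNReal.rpow_le_rpow (hle n) (by norm_num)
        _ = Q (A n) := by
            rw [← ENNReal.rpow_mul]; norm_num
    have : sInf S ^ (2:ℝ) ≤ 0 := ge_of_tendsto' htend h2
    have h3 : sInf S ^ (2:ℝ) = 0 := le_antisymm this zero_le
    rcases ENNReal.rpow_eq_zero_iff.mp h3 with ⟨h, _⟩ | ⟨_, h⟩
    · exact h
    · norm_num at h
  · intro a₁ b₁ a₂ b₂ β₁ β₂ _ _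
    exact stmt13_pos a₁ b₁ a₂ b₂ β₁ β₂
end

section
/- Let Q be the standard normal measure N(0, 1) on ℝ. For n ≥ 1 set b_n = 1/n and a_n = √(1 − 1/n²). Then the functions x ↦ (1/b_n)(a_n x + b_n)⁺ − (a_n/b_n) x⁺ converge to the indicator function 1_{[0,∞)} in L²_Q as n → ∞. -/
open MeasureTheory ProbabilityTheory Filter Real
open scoped NNReal ENNReal

lemma ptwise_bound (n : ℕ) (hn : 2 ≤ n) (x : ℝ) :
    ‖(n : ℝ) * max (Real.sqrt (1 - 1 / (n : ℝ) ^ 2) * x + 1 / (n : ℝ)) 0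
        - Real.sqrt (1 - 1 / (n : ℝ) ^ 2) * (n : ℝ) * max x 0
        - (if 0 ≤ x then (1 : ℝ) else 0)‖
      ≤ ‖(Set.Ico (-(2 / (n : ℝ))) 0).indicator (fun _ => (1 : ℝ)) x‖ := by
  have hn2 : (2 : ℝ) ≤ (n : ℝ) := by exact_mod_cast hn
  have hnpos : (0 : ℝ) < n := by linarith
  set a := Real.sqrt (1 - 1 / (n : ℝ) ^ 2) with ha_def
  have ha0 : 0 ≤ a := Real.sqrt_nonneg _
  have ha : 1 / 2 ≤ a := by
    rw [ha_def]
    have h1 : (1 : ℝ) / 4 ≤ 1 - 1 / (n : ℝ) ^ 2 := by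
      have : 1 / (n : ℝ) ^ 2 ≤ 1 / 4 := by
        apply div_le_div_of_nonneg_left (by norm_num) (by norm_num)
        nlinarith
      linarith
    calc (1 : ℝ) / 2 = Real.sqrt (1 / 4) := by
          rw [show (1:ℝ)/4 = (1/2)^2 by norm_num, Real.sqrt_sq (by norm_num)]
      _ ≤ _ := Real.sqrt_le_sqrt h1
  rcases le_or_gt 0 x with hx | hx
  · have h1 : max (a * x + 1 / (n : ℝ)) 0 = a * x + 1 / (n : ℝ) := by
      apply max_eq_left; positivity
    have h2 : max x 0 = x := max_eq_left hx
    rw [h1, h2, if_pos hx]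
    have : (n : ℝ) * (a * x + 1 / (n : ℝ)) - a * (n : ℝ) * x - 1 = 0 := by
      field_simp; ring
    rw [this]
    simp [norm_nonneg]
  · have h2 : max x 0 = 0 := max_eq_right hx.le
    rw [h2, if_neg (not_le.mpr hx)]
    rcases le_or_gt (a * x + 1 / (n : ℝ)) 0 with h3 | h3
    · rw [max_eq_right h3]
      simp [norm_nonneg]
    · rw [max_eq_left h3.le]
      have hmem : x ∈ Set.Ico (-(2 / (n : ℝ))) 0 := by
        constructor
        · have ha' : (0:ℝ) < a := by linarith
          have key : 0 < a * (x + 2 / (n : ℝ)) := by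
            have h5 : 1 / (n : ℝ) ≤ 2 * a / (n : ℝ) := by
              gcongr
              linarith
            have : a * (x + 2 / (n : ℝ)) = a * x + 1 / (n:ℝ) + (2 * a / (n:ℝ) - 1/(n:ℝ)) := by
              ring
            rw [this]; linarith
          nlinarith [key]
        · exact hx
      rw [Set.indicator_of_mem hmem]
      have hval : (n : ℝ) * (a * x + 1 / (n : ℝ)) - a * (n : ℝ) * 0 - 0
          = (n : ℝ) * a * x + 1 := by field_simp; ring
      rw [hval]
      rw [Real.norm_eq_abs, norm_one, abs_le]
      constructor
      · nlinarith
      · have hnp : (n:ℝ) * a * x ≤ 0 :=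
          mul_nonpos_of_nonneg_of_nonpos (mul_nonneg hnpos.le ha0) hx.le
        linarith

lemma gauss_Ico_le (c : ℝ) (hc : 0 ≤ c) :
    gaussianReal 0 1 (Set.Ico (-c) 0) ≤ ENNReal.ofReal c := by
  rw [gaussianReal_apply 0 one_ne_zero]
  have hbound : ∀ x : ℝ, gaussianPDF 0 1 x ≤ 1 := by
    intro x
    rw [gaussianPDF]
    refine ENNReal.ofReal_le_one.mpr ?_
    rw [gaussianPDFReal]
    have h1 : rexp (-(x - 0) ^ 2 / (2 * (1 : ℝ≥0))) ≤ 1 := by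
      rw [Real.exp_le_one_iff]
      push_cast
      nlinarith [sq_nonneg x]
    have h2 : (Real.sqrt (2 * Real.pi * (1 : ℝ≥0)))⁻¹ ≤ 1 := by
      rw [inv_le_one_iff₀]
      right
      rw [show ((2 : ℝ) * Real.pi * (1 : ℝ≥0)) = 2 * Real.pi by push_cast; ring]
      nlinarith [Real.pi_gt_three, Real.sq_sqrt (by positivity : (0:ℝ) ≤ 2 * Real.pi),
        Real.sqrt_nonneg (2 * Real.pi)]
    calc (Real.sqrt (2 * Real.pi * (1 : ℝ≥0)))⁻¹ * rexp (-(x - 0) ^ 2 / (2 * (1 : ℝ≥0)))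
        ≤ 1 * 1 := mul_le_mul h2 h1 (Real.exp_nonneg _) (by norm_num)
      _ = 1 := by norm_num
  calc ∫⁻ x in Set.Ico (-c) 0, gaussianPDF 0 1 x
      ≤ ∫⁻ _ in Set.Ico (-c) 0, 1 := lintegral_mono fun x => hbound x
    _ = volume (Set.Ico (-c) 0) := by simp
    _ = ENNReal.ofReal c := by rw [Real.volume_Ico]; ring_nf

/-- With `b_n = 1/n` and `a_n = √(1 − 1/n²)`, the functions
`x ↦ (1/b_n)(a_n x + b_n)⁺ − (a_n/b_n) x⁺` converge to the indicator `1_{[0,∞)}`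
in `L²` of the standard Gaussian measure `N(0,1)` as `n → ∞`. -/
theorem stmt14 :
    Tendsto (fun n : ℕ =>
        eLpNorm (fun x : ℝ =>
            (n : ℝ) * max (Real.sqrt (1 - 1 / (n : ℝ) ^ 2) * x + 1 / (n : ℝ)) 0
              - Real.sqrt (1 - 1 / (n : ℝ) ^ 2) * (n : ℝ) * max x 0
              - (if 0 ≤ x then (1 : ℝ) else 0)) 2 (gaussianReal 0 1))
      atTop (nhds 0) := by
  have hub : ∀ n : ℕ, 2 ≤ n →
      eLpNorm (fun x : ℝ =>
            (n : ℝ) * max (Real.sqrt (1 - 1 / (n : ℝ) ^ 2) * x + 1 / (n : ℝ)) 0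
              - Real.sqrt (1 - 1 / (n : ℝ) ^ 2) * (n : ℝ) * max x 0
              - (if 0 ≤ x then (1 : ℝ) else 0)) 2 (gaussianReal 0 1)
        ≤ ENNReal.ofReal (2 / (n : ℝ)) ^ (1 / (2 : ℝ)) := by
    intro n hn
    have hmono := eLpNorm_mono (μ := gaussianReal 0 1) (p := 2) (ptwise_bound n hn)
    refine hmono.trans ?_
    rw [eLpNorm_indicator_const measurableSet_Ico (by norm_num) (by norm_num)]
    simp only [enorm_one, one_mul]
    have htoReal : (2 : ℝ≥0∞).toReal = 2 := by norm_num
    rw [htoReal]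
    exact ENNReal.rpow_le_rpow (gauss_Ico_le _ (by positivity)) (by norm_num)
  have hlim : Tendsto (fun n : ℕ => ENNReal.ofReal (2 / (n : ℝ)) ^ (1 / (2 : ℝ)))
      atTop (nhds 0) := by
    have h1 : Tendsto (fun n : ℕ => (2 / (n : ℝ))) atTop (nhds 0) :=
      tendsto_const_nhds.div_atTop tendsto_natCast_atTop_atTop
    have h2 : Tendsto (fun n : ℕ => ENNReal.ofReal (2 / (n : ℝ))) atTop (nhds 0) := by
      rw [show (0 : ℝ≥0∞) = ENNReal.ofReal 0 by simp]
      exact (ENNReal.continuous_ofReal.tendsto 0).comp h1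
    have h3 : Tendsto (fun y : ℝ≥0∞ => y ^ (1 / (2 : ℝ))) (nhds 0) (nhds 0) := by
      have := (ENNReal.continuous_rpow_const (y := 1 / (2 : ℝ))).tendsto 0
      rwa [ENNReal.zero_rpow_of_pos (by norm_num)] at this
    exact h3.comp h2
  refine tendsto_of_tendsto_of_tendsto_of_le_of_le' tendsto_const_nhds hlim ?_ ?_
  · exact Eventually.of_forall fun n => zero_le
  · filter_upwards [eventually_ge_atTop 2] with n hn using hub n hn
end

section
/- For every real w > 0 and every y ∈ ℝ, the integral ∫_ℝ e^{(w+iλ)y} (w+iλ)^{-2} dλ converges and equals 2π y⁺, i.e. y⁺ = (1/2π) ∫_ℝ e^{(w+iλ)y} (w+iλ)^{-2} dλ. -/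
open MeasureTheory Complex Real Set Filter
open scoped Topology FourierTransform

lemma aux_norm_cexp (c : ℂ) : ‖Complex.exp c‖ = Real.exp c.re := by
  rw [Complex.norm_exp]

lemma aux_real_int {c : ℝ} (hc : 0 < c) :
    IntegrableOn (fun t : ℝ => t * Real.exp (-(c * t))) (Ioi 0) := by
  have := integrableOn_rpow_mul_exp_neg_mul_rpow (s := 1) (p := 1) (b := c)
    (by norm_num) one_pos hc
  refine this.congr_fun (fun x _ => ?_) measurableSet_Ioi
  simp [Real.rpow_one, neg_mul]

lemma aux_tendsto {c : ℝ} (hc : 0 < c) :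
    Tendsto (fun t : ℝ => t * Real.exp (-(c * t))) atTop (𝓝 0) := by
  have := tendsto_rpow_mul_exp_neg_mul_atTop_nhds_zero 1 c hc
  refine this.congr' ?_
  filter_upwards [eventually_ge_atTop (0:ℝ)] with x hx
  simp [Real.rpow_one, neg_mul]

lemma aux_exp_tendsto {c : ℝ} (hc : 0 < c) :
    Tendsto (fun t : ℝ => Real.exp (-(c * t))) atTop (𝓝 0) := by
  have := Real.tendsto_exp_neg_atTop_nhds_zero.comp
    (tendsto_id.const_mul_atTop hc)
  simpa [Function.comp_def] using this

-- key complex integral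
lemma aux_key {z : ℂ} (hz : 0 < z.re) :
    IntegrableOn (fun t : ℝ => (t : ℂ) * Complex.exp (-(z * t))) (Ioi 0) ∧
      ∫ t in Ioi (0:ℝ), (t : ℂ) * Complex.exp (-(z * t)) = 1 / z ^ 2 := by
  have hz0 : z ≠ 0 := fun h => by simp [h] at hz
  have hre : ∀ t : ℝ, (-(z * t)).re = -(z.re * t) := by intro t; simp
  have hnorm : ∀ t : ℝ, 0 ≤ t → ‖(t : ℂ) * Complex.exp (-(z * t))‖
      = t * Real.exp (-(z.re * t)) := by
    intro t ht
    rw [norm_mul, aux_norm_cexp, hre]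
    simp [_root_.abs_of_nonneg ht]
  have hint : IntegrableOn (fun t : ℝ => (t : ℂ) * Complex.exp (-(z * t))) (Ioi 0) := by
    refine Integrable.mono' (aux_real_int hz) ?_ ?_
    · exact (Complex.continuous_ofReal.mul
        (Complex.continuous_exp.comp (by fun_prop))).aestronglyMeasurable
    · filter_upwards [ae_restrict_mem measurableSet_Ioi] with t ht
      rw [hnorm t (le_of_lt ht)]
  refine ⟨hint, ?_⟩
  set F : ℝ → ℂ := fun t => -(((t : ℂ) / z + 1 / z ^ 2) * Complex.exp (-(z * t))) with hF
  have hderiv : ∀ t : ℝ, HasDerivAt F ((t : ℂ) * Complex.exp (-(z * t))) t := by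
    intro t
    have h1 : HasDerivAt (fun t : ℝ => ((t : ℂ) / z + 1 / z ^ 2)) (1 / z) t := by
      have := (Complex.ofRealCLM.hasDerivAt (x := t)).div_const z |>.add_const (1 / z ^ 2)
      simpa [one_div] using this
    have h2 : HasDerivAt (fun t : ℝ => Complex.exp (-(z * t))) (-z * Complex.exp (-(z * t))) t := by
      have : HasDerivAt (fun t : ℝ => -(z * t)) (-z) t := by
        simpa using ((Complex.ofRealCLM.hasDerivAt (x := t)).const_mul z).fun_neg
      simpa [mul_comm] using this.cexp
    have h3 := (h1.fun_mul h2).fun_neg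
    refine h3.congr_deriv ?_
    linear_combination ((t:ℂ) * Complex.exp (-(z * t)) + Complex.exp (-(z * t)) * (1 / z)) * mul_one_div_cancel hz0
  have htend : Tendsto F atTop (𝓝 0) := by
    rw [tendsto_zero_iff_norm_tendsto_zero]
    have hb : Tendsto (fun t : ℝ => (1 / ‖z‖) * (t * Real.exp (-(z.re * t)))
        + (1 / ‖z‖ ^ 2) * Real.exp (-(z.re * t))) atTop (𝓝 (1 / ‖z‖ * 0 + 1 / ‖z‖ ^ 2 * 0)) :=
      ((aux_tendsto hz).const_mul _).add ((aux_exp_tendsto hz).const_mul _)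
    have hb' : Tendsto (fun t : ℝ => (1 / ‖z‖) * (t * Real.exp (-(z.re * t)))
        + (1 / ‖z‖ ^ 2) * Real.exp (-(z.re * t))) atTop (𝓝 0) := by
      simpa using hb
    refine squeeze_zero' ?_ ?_ hb'
    · filter_upwards with t; positivity
    · filter_upwards [eventually_ge_atTop (0:ℝ)] with t ht
      have h4 : ‖F t‖ ≤ (‖(t:ℂ)/z‖ + ‖1/z^2‖) * ‖Complex.exp (-(z * t))‖ := by
        rw [hF]
        simp only [norm_neg, norm_mul]
        gcongr
        exact norm_add_le _ _
      refine h4.trans (le_of_eq ?_)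
      rw [aux_norm_cexp, hre]
      rw [show ‖(t:ℂ)/z‖ = t / ‖z‖ by
        rw [norm_div, Complex.norm_real, Real.norm_eq_abs, _root_.abs_of_nonneg ht]]
      rw [show ‖(1:ℂ)/z^2‖ = 1 / ‖z‖^2 by rw [norm_div, norm_one, norm_pow]]
      ring
  have h0 : F 0 = -(1 / z ^ 2) := by simp [hF]
  have := integral_Ioi_of_hasDerivAt_of_tendsto
    (f := F) (f' := fun t => (t : ℂ) * Complex.exp (-(z * t))) (a := 0) (m := 0)
    (hderiv 0).continuousAt.continuousWithinAt (fun x _ => hderiv x) hint htend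
  rw [this, h0]
  ring

lemma aux_norm_cexp' (c : ℂ) : ‖Complex.exp c‖ = Real.exp c.re := by
  rw [Complex.norm_exp]

lemma aux_int_bound {w b : ℝ} (hw : 0 < w) (hb : 0 < b) {h : ℝ → ℂ}
    (hm : AEStronglyMeasurable h volume)
    (hbound : ∀ l, ‖h l‖ ≤ (w ^ 2 + (b * l) ^ 2)⁻¹) : Integrable h := by
  refine (integrable_inv_one_add_sq.const_mul (max (1 / w ^ 2) (1 / b ^ 2))).mono' hm ?_
  filter_upwards with l
  refine (hbound l).trans ?_
  set C := max (1 / w ^ 2) (1 / b ^ 2) with hC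
  have hC1 : 1 / w ^ 2 ≤ C := le_max_left _ _
  have hC2 : 1 / b ^ 2 ≤ C := le_max_right _ _
  have hpos1 : (0:ℝ) < w ^ 2 + (b * l) ^ 2 := by positivity
  have hpos2 : (0:ℝ) < 1 + l ^ 2 := by positivity
  rw [inv_eq_one_div, inv_eq_one_div, mul_one_div, div_le_div_iff₀ hpos1 hpos2]
  have e1 : 1 ≤ C * w ^ 2 := by
    have := mul_le_mul_of_nonneg_right hC1 (le_of_lt (by positivity : (0:ℝ) < w ^ 2))
    calc (1:ℝ) = 1 / w ^ 2 * w ^ 2 := by field_simp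
    _ ≤ C * w ^ 2 := this
  have e2 : l ^ 2 ≤ C * (b * l) ^ 2 := by
    have h2 := mul_le_mul_of_nonneg_right hC2 (by positivity : (0:ℝ) ≤ (b*l) ^ 2)
    calc l ^ 2 = 1 / b ^ 2 * (b * l) ^ 2 := by field_simp
    _ ≤ C * (b * l) ^ 2 := h2
  nlinarith

/-- For every `w > 0` and `y ∈ ℝ`, the Fourier-type integral
`∫_ℝ e^{(w+iλ)y} (w+iλ)^{-2} dλ` converges and equals `2π y⁺`. -/
theorem stmt18 (w : ℝ) (hw : 0 < w) (y : ℝ) :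
    Integrable (fun l : ℝ =>
        Complex.exp (((w : ℂ) + l * Complex.I) * y) / ((w : ℂ) + l * Complex.I) ^ 2) ∧
      ∫ l : ℝ, Complex.exp (((w : ℂ) + l * Complex.I) * y) / ((w : ℂ) + l * Complex.I) ^ 2 =
        ((2 * Real.pi * max y 0 : ℝ) : ℂ) := by
  -- the function whose Fourier transform is 1/(w+2πiξ)²
  set f : ℝ → ℂ := fun t => ((max t 0 * Real.exp (-(w * max t 0)) : ℝ) : ℂ) with hf_def
  have hf_cont : Continuous f := by
    apply Complex.continuous_ofReal.comp
    fun_prop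
  have hf0 : ∀ t : ℝ, t ≤ 0 → f t = 0 := by
    intro t ht; simp [hf_def, max_eq_right ht]
  have hf_int : Integrable f := by
    have h1 : IntegrableOn f (Iic 0) := by
      refine (integrableOn_zero).congr_fun (fun x hx => (hf0 x hx).symm) measurableSet_Iic
    have h2 : IntegrableOn f (Ioi 0) := by
      refine (aux_real_int hw).mono' (hf_cont.aestronglyMeasurable.restrict) ?_
      filter_upwards [ae_restrict_mem measurableSet_Ioi] with t ht
      rw [hf_def]
      simp only [Complex.norm_real, Real.norm_eq_abs, max_eq_left (le_of_lt (mem_Ioi.mp ht))]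
      rw [_root_.abs_of_nonneg (mul_nonneg (le_of_lt (mem_Ioi.mp ht)) (Real.exp_pos _).le)]
    have := h1.union h2
    rwa [Set.Iic_union_Ioi, integrableOn_univ] at this
  set z : ℝ → ℂ := fun ξ => (w : ℂ) + ((2 * π * ξ : ℝ) : ℂ) * Complex.I with hz_def
  have hz_re : ∀ ξ, (z ξ).re = w := by intro ξ; simp [hz_def]
  have hz_pos : ∀ ξ, 0 < (z ξ).re := fun ξ => by rw [hz_re]; exact hw
  -- compute Fourier transform
  have hFf : ∀ ξ : ℝ, 𝓕 f ξ = 1 / (z ξ) ^ 2 := by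
    intro ξ
    rw [Real.fourier_real_eq_integral_exp_smul]
    rw [← setIntegral_eq_integral_of_forall_compl_eq_zero (s := Ioi 0)
      (fun v hv => by rw [hf0 v (by simpa using hv), smul_zero])]
    rw [← (aux_key (hz_pos ξ)).2]
    refine setIntegral_congr_fun measurableSet_Ioi (fun v hv => ?_)
    rw [smul_eq_mul, hf_def]
    simp only [max_eq_left (le_of_lt (mem_Ioi.mp hv))]
    rw [show -(z ξ * (v:ℂ)) = ((-2 * π * v * ξ : ℝ) : ℂ) * Complex.I + ((-(w * v) : ℝ) : ℂ) by
      rw [hz_def]; push_cast; ring]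
    rw [Complex.exp_add]
    push_cast
    ring
  -- integrability of the Fourier transform
  have hnorm_z : ∀ ξ, ‖1 / (z ξ) ^ 2‖ = (w ^ 2 + (2 * π * ξ) ^ 2)⁻¹ := by
    intro ξ
    have hzx : z ξ = (w:ℂ) + ((2 * π * ξ : ℝ):ℂ) * Complex.I := rfl
    rw [hzx, norm_div, norm_one, norm_pow, Complex.sq_norm,
      Complex.normSq_add_mul_I, one_div]
  have hz_cont : Continuous fun ξ : ℝ => 1 / (z ξ) ^ 2 := by
    apply continuous_const.div
    · fun_prop
    · intro ξ h
      have h0 : z ξ = 0 := pow_eq_zero_iff (n := 2) (by norm_num) |>.mp h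
      exact hw.ne' (by simpa [hz_re] using congrArg Complex.re h0)
  have hFf_int : Integrable (𝓕 f) := by
    refine (aux_int_bound hw (by positivity : (0:ℝ) < 2 * π)
      (h := fun ξ => 1 / (z ξ) ^ 2) hz_cont.aestronglyMeasurable
      (fun ξ => by rw [hnorm_z ξ])).congr ?_
    filter_upwards with ξ
    exact (hFf ξ).symm
  -- Fourier inversion
  have hinv : 𝓕⁻ (𝓕 f) y = f y := hf_int.fourierInv_fourier_eq hFf_int hf_cont.continuousAt
  -- the function after substitution
  set G : ℝ → ℂ := fun l => Complex.exp (((l * y : ℝ) : ℂ) * Complex.I)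
      / ((w : ℂ) + (l : ℂ) * Complex.I) ^ 2 with hG_def
  have hG_eq : ∀ ξ : ℝ, Complex.exp (((-2 * π * ξ * (-y) : ℝ) : ℂ) * Complex.I) • 𝓕 f ξ
      = G (2 * π * ξ) := by
    intro ξ
    rw [hFf ξ, smul_eq_mul, mul_one_div, hG_def, hz_def]
    push_cast
    ring_nf
  have h7 : ∫ ξ : ℝ, G (2 * π * ξ) = f y := by
    rw [← integral_congr_ae (Eventually.of_forall hG_eq)]
    rw [← Real.fourier_real_eq_integral_exp_smul, ← fourierInv_eq_fourier_neg]
    exact hinv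
  have h8 : ∫ ξ : ℝ, G (2 * π * ξ) = |(2 * π)⁻¹| • ∫ l : ℝ, G l :=
    Measure.integral_comp_mul_left G (2 * π)
  have hG_int_val : ∫ l : ℝ, G l = ((2 * π : ℝ) : ℂ) * f y := by
    have hpi : |(2 * π)⁻¹| = (2 * π)⁻¹ := abs_of_pos (by positivity)
    rw [h8, hpi] at h7
    have := congrArg (fun c : ℂ => ((2 * π : ℝ) : ℂ) * c) h7
    simp only [real_smul] at this
    rw [← mul_assoc, ← Complex.ofReal_mul] at this
    rw [mul_inv_cancel₀ (by positivity : (2 * π : ℝ) ≠ 0)] at this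
    simpa using this
  -- norm of G
  have hG_norm : ∀ l : ℝ, ‖G l‖ = (w ^ 2 + (1 * l) ^ 2)⁻¹ := by
    intro l
    rw [hG_def]
    simp only
    rw [norm_div, aux_norm_cexp', norm_pow]
    rw [show ((((l * y : ℝ)):ℂ) * Complex.I).re = 0 by simp]
    rw [Real.exp_zero]
    rw [show ‖(w:ℂ) + (l:ℂ) * Complex.I‖ ^ 2
        = Complex.normSq ((w:ℂ) + (l:ℂ) * Complex.I) from Complex.sq_norm _]
    rw [Complex.normSq_add_mul_I]
    rw [one_mul, inv_eq_one_div]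
  have hG_cont : Continuous G := by
    rw [hG_def]
    apply Continuous.div
    · fun_prop
    · fun_prop
    · intro l h
      have h0 : (w:ℂ) + (l:ℂ) * Complex.I = 0 :=
        pow_eq_zero_iff (n := 2) (by norm_num) |>.mp h
      exact hw.ne' (by simpa using congrArg Complex.re h0)
  have hG_int : Integrable G :=
    aux_int_bound hw one_pos hG_cont.aestronglyMeasurable
      (fun l => le_of_eq (hG_norm l))
  -- relate target integrand to G
  have htarget : ∀ l : ℝ,
      Complex.exp (((w : ℂ) + l * Complex.I) * y) / ((w : ℂ) + l * Complex.I) ^ 2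
        = Complex.exp (((w * y : ℝ) : ℂ)) * G l := by
    intro l
    rw [hG_def]
    simp only
    rw [show ((w : ℂ) + l * Complex.I) * y = ((w * y : ℝ) : ℂ) + ((l * y : ℝ) : ℂ) * Complex.I by
      push_cast; ring]
    rw [Complex.exp_add, mul_div_assoc]
  constructor
  · refine (hG_int.const_mul (Complex.exp ((w * y : ℝ) : ℂ))).congr ?_
    filter_upwards with l
    exact (htarget l).symm
  · rw [integral_congr_ae (Eventually.of_forall htarget), integral_const_mul, hG_int_val]
    rw [hf_def]
    simp only
    rcases le_or_gt y 0 with hy | hy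
    · rw [max_eq_right hy]
      push_cast
      ring
    · rw [max_eq_left hy.le]
      rw [show ((y * Real.exp (-(w * y)) : ℝ) : ℂ)
          = (y : ℂ) * Complex.exp ((( -(w * y) : ℝ) : ℂ)) by push_cast; ring]
      rw [show Complex.exp ((w * y : ℝ) : ℂ) * (((2 * π : ℝ) : ℂ) *
          ((y : ℂ) * Complex.exp (((-(w * y) : ℝ) : ℂ))))
          = ((2 * π : ℝ) : ℂ) * (y : ℂ) *
            (Complex.exp ((w * y : ℝ) : ℂ) * Complex.exp (((-(w * y) : ℝ) : ℂ))) by ring]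
      rw [← Complex.exp_add]
      push_cast
      ring_nf
      simp [Complex.exp_zero]
end
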